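/- arXiv:1710.05078 — 9 statements merged into one kernel-verified Lean document; each statement's English description precedes it below -/
import Mathlib

section
/- Let φ : [0,∞) → [0,∞) be an approximately nondecreasing, unbounded metric transform. Then the transformed Euclidean half line ([0,∞), |·|_φ) is Gromov hyperbolic if and only if one of the following two mutually exclusive conditions holds: (i) φ is an approximate dilation, or (ii) φ is logarithm-like. -/
/-- `d` is a metric on `X`: it vanishes exactly on the diagonal, is symmetric,
and satisfies the triangle inequality. -/
def IsMetricOn {X : Type*} (d : X → X → ℝ) : Prop :=
  (∀ x y : X, d x y = 0 ↔ x = y) ∧ (∀ x y : X, d x y = d y x) ∧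
    (∀ x y z : X, d x z ≤ d x y + d y z)

/-- `φ : [0,∞) → [0,∞)` is a metric transform: for every metric space `(X,d)`,
`φ ∘ d` is again a metric on `X`. -/
def IsMetricTransform (φ : ℝ → ℝ) : Prop :=
  ∀ (X : Type) (d : X → X → ℝ), IsMetricOn d → IsMetricOn (fun x y => φ (d x y))

/-- The Gromov product `(x|y)_w` for a distance function `d`. -/
noncomputable def gromovProd {X : Type*} (d : X → X → ℝ) (w x y : X) : ℝ :=
  (d x w + d y w - d x y) / 2

/-- `d` is `δ`-hyperbolic: `(x|y)_w ≥ min{(x|z)_w, (y|z)_w} − δ` for all `x,y,z,w`. -/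
def IsDeltaHyp {X : Type*} (d : X → X → ℝ) (δ : ℝ) : Prop :=
  ∀ w x y z : X, min (gromovProd d w x z) (gromovProd d w y z) - δ ≤ gromovProd d w x y

/-- `d` is Gromov hyperbolic: it is `δ`-hyperbolic for some `δ ≥ 0`. -/
def IsGromovHyp {X : Type*} (d : X → X → ℝ) : Prop :=
  ∃ δ : ℝ, 0 ≤ δ ∧ IsDeltaHyp d δ

/-- `φ` is approximately nondecreasing on `[0,∞)`:
`η`-nondecreasing for some `η ≥ 0`. -/
def ApproxNondecreasing (φ : ℝ → ℝ) : Prop :=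
  ∃ η : ℝ, 0 ≤ η ∧ ∀ t s : ℝ, 0 ≤ t → t ≤ s → φ t ≤ φ s + η

/-- `φ` is unbounded on `[0,∞)`. -/
def UnboundedOnNonneg (φ : ℝ → ℝ) : Prop :=
  ∀ M : ℝ, ∃ t : ℝ, 0 ≤ t ∧ M < φ t

/-- `φ` is a `(λ,k)`-approximate dilation for some `λ > 0`, `k ≥ 0`. -/
def ApproxDilation (φ : ℝ → ℝ) : Prop :=
  ∃ lam k : ℝ, 0 < lam ∧ 0 ≤ k ∧ ∀ t : ℝ, 0 ≤ t → |φ t - lam * t| ≤ k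

/-- `φ` is logarithm-like: `t ↦ φ(2t) − φ(t)` is bounded from above on `[0,∞)`. -/
def LogarithmLike (φ : ℝ → ℝ) : Prop :=
  ∃ C : ℝ, ∀ t : ℝ, 0 ≤ t → φ (2 * t) - φ t ≤ C

/-- The distance `|x − y|_φ = φ(|x − y|)` on the half line `[0,∞)`. -/
noncomputable def halfLineDist (φ : ℝ → ℝ) (x y : {t : ℝ // 0 ≤ t}) : ℝ :=
  φ |x.1 - y.1|

/-- `(X,d)` contains a `k`-rough geodesic ray for some `k ≥ 0`. -/
def HasRoughGeodesicRay (X : Type*) (d : X → X → ℝ) : Prop :=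
  ∃ k : ℝ, 0 ≤ k ∧ ∃ γ : ℝ → X, ∀ t s : ℝ, 0 ≤ t → 0 ≤ s →
    |t - s| - k ≤ d (γ t) (γ s) ∧ d (γ t) (γ s) ≤ |t - s| + k

/-- `d` is approximately ultrametric: `δ`-ultrametric for some `δ ≥ 0`. -/
def ApproxUltrametric {X : Type*} (d : X → X → ℝ) : Prop :=
  ∃ δ : ℝ, 0 ≤ δ ∧ ∀ x y z : X, d x y ≤ max (d x z) (d z y) + δ

/-- `d` is `k`-roughly geodesic: every pair of points is joined by a `k`-rough
geodesic segment. -/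
def RoughlyGeodesicK {X : Type*} (d : X → X → ℝ) (k : ℝ) : Prop :=
  ∀ x y : X, ∃ b : ℝ, 0 ≤ b ∧ ∃ γ : ℝ → X, γ 0 = x ∧ γ b = y ∧
    ∀ t s : ℝ, t ∈ Set.Icc 0 b → s ∈ Set.Icc 0 b →
      |t - s| - k ≤ d (γ t) (γ s) ∧ d (γ t) (γ s) ≤ |t - s| + k

/-- `d` has the `k`-rough midpoint property. -/
def RoughMidpointK {X : Type*} (d : X → X → ℝ) (k : ℝ) : Prop :=
  ∀ x y : X, ∃ z : X, max (d x z) (d y z) ≤ d x y / 2 + k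

/-- `(a,b,c)` is a triangle triplet. -/
def IsTriangleTriplet (a b c : ℝ) : Prop := a ≤ b + c ∧ b ≤ a + c ∧ c ≤ a + b

/-- The Euclidean line is `0`-hyperbolic (four-point inequality in Gromov-product
form). -/
lemma aux_line_hyp (w x y z : ℝ) :
    min (|x - w| + |z - w| - |x - z|) (|y - w| + |z - w| - |y - z|)
      ≤ |x - w| + |y - w| - |x - y| := by
  rcases le_total (|x - w| + |z - w| - |x - z|) (|y - w| + |z - w| - |y - z|) with hm | hm
  · rw [min_eq_left hm]
    rcases abs_cases (x - w) with ⟨e1, f1⟩ | ⟨e1, f1⟩ <;>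
    rcases abs_cases (y - w) with ⟨e2, f2⟩ | ⟨e2, f2⟩ <;>
    rcases abs_cases (z - w) with ⟨e3, f3⟩ | ⟨e3, f3⟩ <;>
    rcases abs_cases (x - y) with ⟨e4, f4⟩ | ⟨e4, f4⟩ <;>
    rcases abs_cases (x - z) with ⟨e5, f5⟩ | ⟨e5, f5⟩ <;>
    rcases abs_cases (y - z) with ⟨e6, f6⟩ | ⟨e6, f6⟩ <;>
    linarith
  · rw [min_eq_right hm]
    rcases abs_cases (x - w) with ⟨e1, f1⟩ | ⟨e1, f1⟩ <;>
    rcases abs_cases (y - w) with ⟨e2, f2⟩ | ⟨e2, f2⟩ <;>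
    rcases abs_cases (z - w) with ⟨e3, f3⟩ | ⟨e3, f3⟩ <;>
    rcases abs_cases (x - y) with ⟨e4, f4⟩ | ⟨e4, f4⟩ <;>
    rcases abs_cases (x - z) with ⟨e5, f5⟩ | ⟨e5, f5⟩ <;>
    rcases abs_cases (y - z) with ⟨e6, f6⟩ | ⟨e6, f6⟩ <;>
    linarith

set_option maxHeartbeats 2000000 in
/-- An approximately ultrametric (symmetric) distance is hyperbolic. -/
lemma aux_ultra_to_hyp {X : Type*} (d : X → X → ℝ) (δ : ℝ)
    (hsymm : ∀ a b, d a b = d b a)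
    (hultra : ∀ x y z, d x y ≤ max (d x z) (d z y) + δ) :
    IsDeltaHyp d (2 * δ) := by
  intro w x y z
  have F1 : d x y ≤ max (d x z) (d y z) + δ := by have h := hultra x y z; rwa [hsymm z y] at h
  have F2 : d z w ≤ max (d x z) (d x w) + δ := by have h := hultra z w x; rwa [hsymm z x] at h
  have F3 : d z w ≤ max (d y z) (d y w) + δ := by have h := hultra z w y; rwa [hsymm z y] at h
  have F4 : d x y ≤ max (d x w) (d y w) + δ := by have h := hultra x y w; rwa [hsymm w y] at h
  have F5 : d x z ≤ max (d x y) (d y z) + δ := hultra x z y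
  have F6 : d y z ≤ max (d x y) (d x z) + δ := by have h := hultra y z x; rwa [hsymm y x] at h
  simp only [gromovProd]
  rcases le_total ((d x w + d z w - d x z) / 2) ((d y w + d z w - d y z) / 2) with hm | hm
  · rw [min_eq_left hm]
    rcases max_cases (d x z) (d y z) with ⟨e1, _⟩ | ⟨e1, _⟩ <;>
    rcases max_cases (d x z) (d x w) with ⟨e2, _⟩ | ⟨e2, _⟩ <;>
    rcases max_cases (d y z) (d y w) with ⟨e3, _⟩ | ⟨e3, _⟩ <;>
    rcases max_cases (d x w) (d y w) with ⟨e4, _⟩ | ⟨e4, _⟩ <;>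
    rcases max_cases (d x y) (d y z) with ⟨e5, _⟩ | ⟨e5, _⟩ <;>
    rcases max_cases (d x y) (d x z) with ⟨e6, _⟩ | ⟨e6, _⟩ <;>
    linarith
  · rw [min_eq_right hm]
    rcases max_cases (d x z) (d y z) with ⟨e1, _⟩ | ⟨e1, _⟩ <;>
    rcases max_cases (d x z) (d x w) with ⟨e2, _⟩ | ⟨e2, _⟩ <;>
    rcases max_cases (d y z) (d y w) with ⟨e3, _⟩ | ⟨e3, _⟩ <;>
    rcases max_cases (d x w) (d y w) with ⟨e4, _⟩ | ⟨e4, _⟩ <;>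
    rcases max_cases (d x y) (d x z) with ⟨e5, _⟩ | ⟨e5, _⟩ <;>
    rcases max_cases (d x y) (d y z) with ⟨e6, _⟩ | ⟨e6, _⟩ <;>
    linarith

/-- If `φ` grows at a linear rate strictly larger than an approximate rate witnessed
somewhere, we get a contradiction (by subadditivity and approximate monotonicity). -/
lemma aux_rate_contra (φ : ℝ → ℝ) (η lam p ε : ℝ) (hp : 0 < p) (hε : 0 < ε)
    (hlam : 0 ≤ lam)
    (hmono : ∀ t s : ℝ, 0 ≤ t → t ≤ s → φ t ≤ φ s + η)
    (hsub : ∀ u v : ℝ, 0 ≤ u → 0 ≤ v → φ (u + v) ≤ φ u + φ v)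
    (hzero : φ 0 = 0)
    (hs : ∃ s : ℝ, 0 < s ∧ φ s < s * (lam + ε/2))
    (hgrow : ∀ n : ℕ, ((n:ℝ)+1) * p * (lam + ε) ≤ φ (((n:ℝ)+1) * p)) : False := by
  obtain ⟨s, hs0, hsv⟩ := hs
  have hmul : ∀ (m : ℕ), φ ((m:ℝ) * s) ≤ (m:ℝ) * φ s := by
    intro m
    induction m with
    | zero => simp [hzero]
    | succ m ih =>
      have h1 : φ ((m:ℝ) * s + s) ≤ φ ((m:ℝ) * s) + φ s :=
        hsub _ _ (by positivity) hs0.le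
      push_cast
      have e : ((m:ℝ) + 1) * s = (m:ℝ) * s + s := by ring
      rw [e]
      linarith
  have key : ∀ n : ℕ, ((n:ℝ)+1) * (p * ε / 2) ≤ s * (lam + ε/2) + η := by
    intro n
    have hT0 : (0:ℝ) < ((n:ℝ)+1) * p := by positivity
    set m := ⌈(((n:ℝ)+1) * p) / s⌉₊ with hmdef
    have h1 : ((n:ℝ)+1) * p ≤ (m:ℝ) * s := by
      have hle := Nat.le_ceil ((((n:ℝ)+1) * p) / s)
      have := mul_le_mul_of_nonneg_right hle hs0.le
      rwa [div_mul_cancel₀ _ (ne_of_gt hs0)] at this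
    have h2 : (m:ℝ) * s ≤ ((n:ℝ)+1) * p + s := by
      have hc : (m:ℝ) < (((n:ℝ)+1) * p) / s + 1 := Nat.ceil_lt_add_one (by positivity)
      have h := mul_le_mul_of_nonneg_right hc.le hs0.le
      rw [add_mul, div_mul_cancel₀ _ (ne_of_gt hs0), one_mul] at h
      exact h
    have h3 : φ (((n:ℝ)+1) * p) ≤ φ ((m:ℝ) * s) + η := hmono _ _ hT0.le h1
    have h4 : φ ((m:ℝ) * s) ≤ (m:ℝ) * φ s := hmul m
    have h5 : (m:ℝ) * φ s ≤ (m:ℝ) * (s * (lam + ε/2)) :=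
      mul_le_mul_of_nonneg_left hsv.le (Nat.cast_nonneg m)
    have h6 : (m:ℝ) * (s * (lam + ε/2)) ≤ (((n:ℝ)+1) * p + s) * (lam + ε/2) := by
      rw [← mul_assoc]
      exact mul_le_mul_of_nonneg_right h2 (by linarith)
    have h7 := hgrow n
    nlinarith [h3, h4, h5, h6, h7]
  obtain ⟨n, hn⟩ := exists_nat_gt ((s * (lam + ε/2) + η) / (p * ε / 2))
  have hpε : (0:ℝ) < p * ε / 2 := by positivity
  rw [div_lt_iff₀ hpε] at hn
  have hk := key n
  nlinarith [hk, hn, hpε]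

set_option maxHeartbeats 4000000 in
/-- Theorem A: characterization of approximately nondecreasing, unbounded metric
transforms making the Euclidean half line Gromov hyperbolic. -/
theorem stmt_0 (φ : ℝ → ℝ)
    (hnonneg : ∀ t : ℝ, 0 ≤ t → 0 ≤ φ t)
    (hmt : IsMetricTransform φ)
    (hand : ApproxNondecreasing φ)
    (hub : UnboundedOnNonneg φ) :
    (IsGromovHyp (halfLineDist φ) ↔ (ApproxDilation φ ∨ LogarithmLike φ)) ∧
      ¬(ApproxDilation φ ∧ LogarithmLike φ) := by
  obtain ⟨η, hη0, hmono⟩ := hand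
  -- basic facts from the metric transform property, applied to `(ℝ, | · |)`
  have habs : IsMetricOn (fun x y : ℝ => |x - y|) :=
    ⟨fun x y => by rw [abs_eq_zero, sub_eq_zero],
     fun x y => abs_sub_comm x y, fun x y z => abs_sub_le x y z⟩
  obtain ⟨hz, hsymm', htri⟩ := hmt ℝ _ habs
  have hzero : φ 0 = 0 := by
    have h := (hz 0 0).mpr rfl
    simpa using h
  have hsub : ∀ u v : ℝ, 0 ≤ u → 0 ≤ v → φ (u + v) ≤ φ u + φ v := by
    intro u v hu hv
    have h := htri 0 u (u + v)
    simp only at h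
    rw [show |(0:ℝ) - (u+v)| = u + v by rw [zero_sub, abs_neg, abs_of_nonneg (by linarith)],
        show |(0:ℝ) - u| = u by rw [zero_sub, abs_neg, abs_of_nonneg hu],
        show |u - (u+v)| = v by rw [show u - (u+v) = -v by ring, abs_neg, abs_of_nonneg hv]] at h
    exact h
  constructor
  · constructor
    · -- forward direction
      rintro ⟨δ, hδ0, hδ⟩
      have hHeart : ∀ a b c : ℝ, 0 ≤ a → 0 ≤ b → 0 ≤ c →
          φ (a+b) + φ (b+c) ≤ max (φ a + φ c) (φ b + φ (a+b+c)) + 2*δ := by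
        intro a b c ha hb hc
        have H := hδ ⟨a+b+c, by linarith⟩ ⟨0, le_refl 0⟩ ⟨a+b, by linarith⟩ ⟨a, ha⟩
        simp only [gromovProd, halfLineDist] at H
        rw [show |(0:ℝ) - (a+b+c)| = a+b+c by
              rw [zero_sub, abs_neg, abs_of_nonneg]; linarith,
            show |a - (a+b+c)| = b+c by
              rw [show a - (a+b+c) = -(b+c) by ring, abs_neg, abs_of_nonneg]; linarith,
            show |(0:ℝ) - a| = a by rw [zero_sub, abs_neg, abs_of_nonneg ha],
            show |a+b - (a+b+c)| = c by
              rw [show a+b - (a+b+c) = -c by ring, abs_neg, abs_of_nonneg hc],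
            show |(0:ℝ) - (a+b)| = a+b by
              rw [zero_sub, abs_neg, abs_of_nonneg]; linarith,
            show |a+b - a| = b by rw [show a+b-a = b by ring, abs_of_nonneg hb]] at H
        rcases le_total ((φ (a+b+c) + φ (b+c) - φ a) / 2) ((φ c + φ (b+c) - φ b) / 2) with hm | hm
        · rw [min_eq_left hm] at H
          have := le_max_left (φ a + φ c) (φ b + φ (a+b+c))
          linarith
        · rw [min_eq_right hm] at H
          have := le_max_right (φ a + φ c) (φ b + φ (a+b+c))
          linarith
      -- the asymptotic rate
      set S : Set ℝ := (fun t : ℝ => φ t / t) '' Set.Ioi (0:ℝ) with hSdef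
      have hSne : S.Nonempty := ⟨φ 1 / 1, ⟨1, by norm_num, rfl⟩⟩
      have hSbd : BddBelow S := by
        refine ⟨0, ?_⟩
        rintro r ⟨t, ht, rfl⟩
        exact div_nonneg (hnonneg t (le_of_lt ht)) (le_of_lt ht)
      set lam := sInf S with hlamdef
      have hlam0 : 0 ≤ lam := by
        apply le_csInf hSne
        rintro r ⟨t, ht, rfl⟩
        exact div_nonneg (hnonneg t (le_of_lt ht)) (le_of_lt ht)
      have hlam_le : ∀ u : ℝ, 0 < u → lam * u ≤ φ u := by
        intro u hu
        have h : lam ≤ φ u / u := csInf_le hSbd ⟨u, hu, rfl⟩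
        rw [le_div_iff₀ hu] at h
        exact h
      have hlt : ∀ c : ℝ, lam < c → ∃ s : ℝ, 0 < s ∧ φ s < s * c := by
        intro c hc
        obtain ⟨r, hrS, hrc⟩ := exists_lt_of_csInf_lt hSne hc
        obtain ⟨s, hsI, rfl⟩ := hrS
        refine ⟨s, hsI, ?_⟩
        rw [div_lt_iff₀ hsI] at hrc
        linarith [hrc]
      rcases eq_or_lt_of_le hlam0 with hl0 | hlpos
      · -- rate zero : logarithm-like
        right
        refine ⟨2*δ + η, ?_⟩
        intro t ht
        by_contra hcon
        push_neg at hcon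
        have ht0 : 0 < t := by
          rcases eq_or_lt_of_le ht with h | h
          · exfalso
            rw [← h] at hcon
            norm_num at hcon
            linarith
          · exact h
        have htt : φ (t + t) = φ (2*t) := by rw [two_mul]
        have hφt : φ (2*t) - φ t ≤ φ t := by
          have := hsub t t ht ht
          rw [htt] at this
          linarith
        have hA : 0 < φ (2*t) - φ t - 2*δ := by linarith
        have hind : ∀ n : ℕ, (n:ℝ) * (φ (2*t) - φ t - 2*δ) + φ t ≤ φ ((n:ℝ)*t + t) := by
          intro n
          induction n with
          | zero => simp
          | succ n ih =>
            have hh := hHeart ((n:ℝ)*t) t t (by positivity) ht ht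
            rcases max_cases (φ ((n:ℝ)*t) + φ t) (φ t + φ ((n:ℝ)*t + t + t)) with ⟨e, _⟩ | ⟨e, _⟩ <;>
              rw [e] at hh
            · exfalso
              have hm' : φ ((n:ℝ)*t) ≤ φ ((n:ℝ)*t + t) + η :=
                hmono _ _ (by positivity) (by linarith)
              rw [htt] at hh
              linarith
            · rw [htt] at hh
              push_cast
              have e2 : ((n:ℝ) + 1)*t + t = (n:ℝ)*t + t + t := by ring
              rw [e2]
              linarith
        have hεA : 0 < (φ (2*t) - φ t - 2*δ)/(2*t) := div_pos hA (by linarith)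
        refine aux_rate_contra φ η lam t ((φ (2*t) - φ t - 2*δ)/(2*t)) ht0
          hεA hlam0 hmono hsub hzero
          (hlt _ (by linarith)) ?_
        intro n
        have hi := hind n
        rw [← hl0]
        have e : ((n:ℝ)+1)*t*((0:ℝ) + (φ (2*t) - φ t - 2*δ)/(2*t))
            = ((n:ℝ)+1)*((φ (2*t) - φ t - 2*δ)/2) := by
          field_simp
          ring
        rw [e, show ((n:ℝ)+1)*t = (n:ℝ)*t + t by ring]
        have hnA : 0 ≤ (n:ℝ) * (φ (2*t) - φ t - 2*δ) :=
          mul_nonneg (Nat.cast_nonneg n) hA.le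
        linarith
      · -- positive rate : approximate dilation
        left
        set b0 := (2*δ + η + 1)/lam with hb0def
        have hb0pos : 0 < b0 := div_pos (by linarith) hlpos
        have hlamb0 : lam * b0 = 2*δ + η + 1 := by
          rw [hb0def]
          field_simp
        set C0 := φ b0 + η + 2*δ with hC0def
        have hC00 : 0 ≤ C0 := by
          have := hnonneg b0 hb0pos.le
          simp only [hC0def]
          linarith
        have hbdd : ∃ K : ℝ, ∀ u : ℝ, 0 ≤ u → φ u - lam*u ≤ K := by
          by_contra hK
          push_neg at hK
          obtain ⟨t0, ht00, ht0⟩ := hK (C0 + 1 + φ b0 + η)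
          set Sg : Set ℝ := (fun u : ℝ => φ u - lam*u) '' Set.Icc 0 t0 with hSgdef
          have hSgne : Sg.Nonempty := ⟨_, ⟨t0, ⟨ht00, le_refl t0⟩, rfl⟩⟩
          have hSgbd : BddAbove Sg := by
            refine ⟨φ t0 + η, ?_⟩
            rintro r ⟨u, ⟨hu0, hu1⟩, rfl⟩
            have h1 := hmono u t0 hu0 hu1
            have h2 : 0 ≤ lam * u := mul_nonneg hlpos.le hu0
            simp only
            linarith
          set M := sSup Sg with hMdef
          have hM1 : φ t0 - lam*t0 ≤ M := le_csSup hSgbd ⟨t0, ⟨ht00, le_refl t0⟩, rfl⟩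
          obtain ⟨r, hrS, hrM⟩ := exists_lt_of_lt_csSup hSgne (show M - 1/2 < M by linarith)
          obtain ⟨x, ⟨hx0, hxt0⟩, rfl⟩ := hrS
          simp only at hrM
          have hgt0 : C0 + 1 + φ b0 + η < φ t0 - lam*t0 := ht0
          have hxb : b0 ≤ x := by
            by_contra hxb
            push_neg at hxb
            have h1 : φ x ≤ φ b0 + η := hmono x b0 hx0 hxb.le
            have h2 : 0 ≤ lam * x := mul_nonneg hlpos.le hx0
            linarith
          have hxpos : 0 < x := lt_of_lt_of_le hb0pos hxb
          have hsup : ∀ y : ℝ, b0 ≤ y → φ x + φ y ≤ φ (x + y) + C0 := by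
            intro y hy
            have hy0 : 0 ≤ y := le_trans hb0pos.le hy
            have hh := hHeart (x - b0) b0 (y - b0) (by linarith) hb0pos.le (by linarith)
            rw [show x - b0 + b0 + (y - b0) = x + y - b0 by ring,
                show x - b0 + b0 = x by ring, show b0 + (y - b0) = y by ring] at hh
            rcases max_cases (φ (x - b0) + φ (y - b0)) (φ b0 + φ (x + y - b0)) with ⟨e, _⟩ | ⟨e, _⟩ <;>
              rw [e] at hh
            · exfalso
              have m1 : φ (y - b0) ≤ φ y + η := hmono _ _ (by linarith) (by linarith)
              have m2 : φ (x - b0) - lam*(x - b0) ≤ M :=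
                le_csSup hSgbd ⟨x - b0, ⟨by linarith, by linarith⟩, rfl⟩
              nlinarith [hlamb0, hrM, hM1, hgt0]
            · have m3 : φ (x + y - b0) ≤ φ (x + y) + η := hmono _ _ (by linarith) (by linarith)
              simp only [hC0def]
              linarith
          have hφx : lam*x + C0 + 1/2 ≤ φ x := by
            have h0 : 0 ≤ φ b0 := hnonneg b0 hb0pos.le
            linarith
          have hchain : ∀ n : ℕ, ((n:ℝ)+1) * φ x - (n:ℝ)*C0 ≤ φ (((n:ℝ)+1)*x) := by
            intro n
            induction n with
            | zero => norm_num
            | succ n ih =>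
              have hy : b0 ≤ ((n:ℝ)+1)*x := by nlinarith [Nat.cast_nonneg (α := ℝ) n]
              have hs' := hsup (((n:ℝ)+1)*x) hy
              rw [show x + ((n:ℝ)+1)*x = (((n:ℝ)+1)+1)*x by ring] at hs'
              push_cast
              linarith
          have hεx : (0:ℝ) < 1/(2*x) := by positivity
          refine aux_rate_contra φ η lam x (1/(2*x)) hxpos hεx hlam0 hmono hsub hzero
            (hlt _ (by linarith)) ?_
          intro n
          have e : ((n:ℝ)+1)*x*(lam + 1/(2*x)) = ((n:ℝ)+1)*(lam*x) + ((n:ℝ)+1)*(1/2) := by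
            field_simp
          rw [e]
          have hmul' := mul_le_mul_of_nonneg_left hφx (show (0:ℝ) ≤ (n:ℝ)+1 by positivity)
          have hcn := hchain n
          have hnC : 0 ≤ (n:ℝ)*C0 := mul_nonneg (Nat.cast_nonneg n) hC00
          nlinarith
        obtain ⟨K, hKb⟩ := hbdd
        refine ⟨lam, max K 0, hlpos, le_max_right _ _, ?_⟩
        intro u hu
        rw [abs_le]
        constructor
        · have h1 : lam * u ≤ φ u := by
            rcases eq_or_lt_of_le hu with h | h
            · rw [← h]
              simp [hzero]
            · exact hlam_le u h
          have := le_max_right K 0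
          linarith
        · have := hKb u hu
          have := le_max_left K 0
          linarith
    · -- backward direction
      rintro (⟨lam, k, hlpos, hk0, hdil⟩ | ⟨C, hlog⟩)
      · refine ⟨3*k, by linarith, ?_⟩
        intro w x y z
        simp only [gromovProd, halfLineDist]
        obtain ⟨a1, b1⟩ := abs_le.mp (hdil |x.1 - w.1| (abs_nonneg _))
        obtain ⟨a2, b2⟩ := abs_le.mp (hdil |y.1 - w.1| (abs_nonneg _))
        obtain ⟨a3, b3⟩ := abs_le.mp (hdil |z.1 - w.1| (abs_nonneg _))
        obtain ⟨a4, b4⟩ := abs_le.mp (hdil |x.1 - y.1| (abs_nonneg _))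
        obtain ⟨a5, b5⟩ := abs_le.mp (hdil |x.1 - z.1| (abs_nonneg _))
        obtain ⟨a6, b6⟩ := abs_le.mp (hdil |y.1 - z.1| (abs_nonneg _))
        rcases le_total (|x.1 - w.1| + |z.1 - w.1| - |x.1 - z.1|)
            (|y.1 - w.1| + |z.1 - w.1| - |y.1 - z.1|) with hm | hm
        · have hL := aux_line_hyp w.1 x.1 y.1 z.1
          rw [min_eq_left hm] at hL
          have hmul := mul_le_mul_of_nonneg_left hL hlpos.le
          have hmin := min_le_left
            ((φ |x.1 - w.1| + φ |z.1 - w.1| - φ |x.1 - z.1|)/2)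
            ((φ |y.1 - w.1| + φ |z.1 - w.1| - φ |y.1 - z.1|)/2)
          nlinarith [hmul, hmin]
        · have hL := aux_line_hyp w.1 x.1 y.1 z.1
          rw [min_eq_right hm] at hL
          have hmul := mul_le_mul_of_nonneg_left hL hlpos.le
          have hmin := min_le_right
            ((φ |x.1 - w.1| + φ |z.1 - w.1| - φ |x.1 - z.1|)/2)
            ((φ |y.1 - w.1| + φ |z.1 - w.1| - φ |y.1 - z.1|)/2)
          nlinarith [hmul, hmin]
      · refine ⟨2 * max (C + η) 0, by have := le_max_right (C + η) (0:ℝ); linarith, ?_⟩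
        apply aux_ultra_to_hyp
        · intro a b
          simp only [halfLineDist]
          rw [abs_sub_comm]
        · intro x y z
          simp only [halfLineDist]
          have h1 : |x.1 - y.1| ≤ |x.1 - z.1| + |z.1 - y.1| := abs_sub_le _ _ _
          rcases le_total (|x.1 - z.1|) (|z.1 - y.1|) with hd | hd
          · have h2 : φ |x.1 - y.1| ≤ φ (2 * |z.1 - y.1|) + η :=
              hmono _ _ (abs_nonneg _) (by linarith)
            have h3 : φ (2 * |z.1 - y.1|) - φ |z.1 - y.1| ≤ C := hlog _ (abs_nonneg _)
            have h4 := le_max_right (φ |x.1 - z.1|) (φ |z.1 - y.1|)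
            have h5 := le_max_left (C + η) (0:ℝ)
            linarith
          · have h2 : φ |x.1 - y.1| ≤ φ (2 * |x.1 - z.1|) + η :=
              hmono _ _ (abs_nonneg _) (by linarith)
            have h3 : φ (2 * |x.1 - z.1|) - φ |x.1 - z.1| ≤ C := hlog _ (abs_nonneg _)
            have h4 := le_max_left (φ |x.1 - z.1|) (φ |z.1 - y.1|)
            have h5 := le_max_left (C + η) (0:ℝ)
            linarith
  · -- mutual exclusivity
    rintro ⟨⟨lam, k, hlpos, hk0, hdil⟩, ⟨C, hlog⟩⟩
    have hC0 : 0 ≤ C := by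
      have h := hlog 0 (le_refl 0)
      rw [mul_zero, hzero] at h
      linarith
    set t := (C + 2*k + 1)/lam with htdef
    have ht0 : 0 ≤ t := div_nonneg (by linarith) hlpos.le
    have hlamt : lam * t = C + 2*k + 1 := by
      rw [htdef]
      field_simp
    obtain ⟨c1, c2⟩ := abs_le.mp (hdil t ht0)
    obtain ⟨d1, d2⟩ := abs_le.mp (hdil (2*t) (by linarith))
    have h3 := hlog t ht0
    nlinarith
end

section
/- Let (X,d) be a metric space containing a rough geodesic ray, and let φ : [0,∞) → [0,∞) be an approximately nondecreasing, unbounded metric transform. If the transformed space (X,d_φ) is Gromov hyperbolic, then either (i) (X,d) is Gromov hyperbolic and φ is an approximate dilation, or (ii) (X,d_φ) is approximately ultrametric; moreover conditions (i) and (ii) cannot both hold. -/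
/-!
Pulling the rough geodesic ray back, `φ(|s - t|)` satisfies the four-point condition on `[0,∞)`
up to a constant, and `φ` is subadditive because it is a metric transform.

If `φ(2t) - φ(t)` is bounded, `φ` turns the triangle inequality `d(x,y) ≤ 2 max(d(x,z), d(z,y))`
into an approximate ultrametric inequality. Otherwise a large gap `φ(2t) - φ(t)` propagates along
the half line, so `φ → ∞`; the four-point condition then makes the increments `φ(m + a) - φ(m)`
stabilize as `m → ∞` to a roughly additive function of `a`, which (Hyers–Ulam) is `λa + O(1)`.
The four-point condition on `0, x, x + y₀, 2x + y₀` would make `φ(t) - λt` double along a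
geometric sequence, which sublinearity forbids; so `φ(t) ≤ λt + O(1)` at arbitrarily large `t`,
which makes `φ` roughly superadditive, hence an approximate dilation, and Gromov products for `d`
and `φ ∘ d` then agree up to the factor `λ`.

The two alternatives exclude each other: for an approximate dilation, the points `γ 0, γ T, γ 2T`
of the ray violate the approximate ultrametric inequality once `T` is large.
-/

open Filter

def NondecreasingUpTo (φ : ℝ → ℝ) (η : ℝ) : Prop :=
  ∀ t s : ℝ, 0 ≤ t → t ≤ s → φ t ≤ φ s + η

def FourPoint {Y : Type*} (d : Y → Y → ℝ) (Δ : ℝ) : Prop :=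
  ∀ x y z w : Y, d x y + d z w ≤ max (d x z + d y w) (d x w + d y z) + Δ

lemma NondecreasingUpTo.nonneg {φ : ℝ → ℝ} {η : ℝ} (h : NondecreasingUpTo φ η) : 0 ≤ η := by
  linarith [h 0 0 le_rfl le_rfl]

lemma FourPoint.nonneg {Y : Type*} {d : Y → Y → ℝ} {Δ : ℝ} (h : FourPoint d Δ) (x : Y) :
    0 ≤ Δ := by
  have := h x x x x
  rw [max_self] at this
  linarith

lemma isMetricOn_abs_sub : IsMetricOn fun x y : ℝ => |x - y| :=
  ⟨fun x y => by rw [abs_eq_zero, sub_eq_zero], abs_sub_comm, abs_sub_le⟩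

lemma IsMetricTransform.map_zero {φ : ℝ → ℝ} (h : IsMetricTransform φ) : φ 0 = 0 := by
  simpa using ((h ℝ _ isMetricOn_abs_sub).1 0 0).2 rfl

lemma IsMetricTransform.map_add_le {φ : ℝ → ℝ} (h : IsMetricTransform φ) {a b : ℝ}
    (ha : 0 ≤ a) (hb : 0 ≤ b) : φ (a + b) ≤ φ a + φ b := by
  have := (h ℝ _ isMetricOn_abs_sub).2.2 0 a (a + b)
  simp only [zero_sub, abs_neg, sub_add_cancel_left] at this
  rwa [abs_of_nonneg ha, abs_of_nonneg hb, abs_of_nonneg (add_nonneg ha hb)] at this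

lemma IsDeltaHyp.fourPoint {X : Type*} {d : X → X → ℝ} {δ : ℝ} (h : IsDeltaHyp d δ) :
    FourPoint d (2 * δ) := by
  intro x y z w
  have hxy := h w x y z
  simp only [gromovProd] at hxy
  rcases min_choice ((d x w + d z w - d x z) / 2) ((d y w + d z w - d y z) / 2) with hm | hm <;>
    rw [hm] at hxy
  · linarith [le_max_left (d x z + d y w) (d x w + d y z)]
  · linarith [le_max_right (d x z + d y w) (d x w + d y z)]

lemma FourPoint.comap {X Y : Type*} {d : X → X → ℝ} {d' : Y → Y → ℝ} {Δ ε : ℝ}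
    (h : FourPoint d Δ) (f : Y → X) (hf : ∀ a b, |d (f a) (f b) - d' a b| ≤ ε) :
    FourPoint d' (Δ + 4 * ε) := by
  intro x y z w
  have hxy := abs_le.1 (hf x y); have hzw := abs_le.1 (hf z w)
  have hxz := abs_le.1 (hf x z); have hyw := abs_le.1 (hf y w)
  have hxw := abs_le.1 (hf x w); have hyz := abs_le.1 (hf y z)
  have hmax : max (d (f x) (f z) + d (f y) (f w)) (d (f x) (f w) + d (f y) (f z)) ≤
      max (d' x z + d' y w) (d' x w + d' y z) + 2 * ε :=
    max_le (by linarith [le_max_left (d' x z + d' y w) (d' x w + d' y z)])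
      (by linarith [le_max_right (d' x z + d' y w) (d' x w + d' y z)])
  linarith [h (f x) (f y) (f z) (f w)]

lemma abs_map_sub_map_le {φ : ℝ → ℝ} {η : ℝ} (hmono : NondecreasingUpTo φ η)
    (hsub : ∀ a b : ℝ, 0 ≤ a → 0 ≤ b → φ (a + b) ≤ φ a + φ b) {s t k : ℝ}
    (hs : 0 ≤ s) (ht : 0 ≤ t) (hk : 0 ≤ k) (hst : |s - t| ≤ k) : |φ s - φ t| ≤ φ k + η := by
  obtain ⟨hst₁, hst₂⟩ := abs_le.1 hst
  rw [abs_sub_le_iff]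
  constructor
  · linarith [hmono s (t + k) hs (by linarith), hsub t k ht hk]
  · linarith [hmono t (s + k) ht (by linarith), hsub s k hs hk]

lemma HasRoughGeodesicRay.fourPoint_halfLine {X : Type*} [PseudoMetricSpace X] {φ : ℝ → ℝ}
    {η Δ : ℝ} (hray : HasRoughGeodesicRay X fun x y => dist x y)
    (hmono : NondecreasingUpTo φ η) (hsub : ∀ a b : ℝ, 0 ≤ a → 0 ≤ b → φ (a + b) ≤ φ a + φ b)
    (h : FourPoint (fun x y : X => φ (dist x y)) Δ) : ∃ Δ', FourPoint (halfLineDist φ) Δ' := by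
  obtain ⟨k, hk, γ, hγ⟩ := hray
  refine ⟨_, h.comap (ε := φ k + η) (fun t => γ t) fun u v => ?_⟩
  obtain ⟨hlow, hupp⟩ := hγ u v u.2 v.2
  exact abs_map_sub_map_le hmono hsub dist_nonneg (abs_nonneg _) hk
    (abs_sub_le_iff.2 ⟨by linarith, by linarith⟩)

section RoughlyAdditive

variable {ψ : ℝ → ℝ} {c η : ℝ}

lemma abs_map_nat_mul_sub_le (h0 : ψ 0 = 0)
    (hadd : ∀ a b : ℝ, 0 ≤ a → 0 ≤ b → |ψ (a + b) - ψ a - ψ b| ≤ c) {x : ℝ} (hx : 0 ≤ x)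
    (n : ℕ) : |ψ (n * x) - n * ψ x| ≤ n * c := by
  induction n with
  | zero => simp [h0]
  | succ n ih =>
    push_cast
    calc |ψ ((n + 1) * x) - (n + 1) * ψ x|
        = |(ψ (n * x + x) - ψ (n * x) - ψ x) + (ψ (n * x) - n * ψ x)| := by ring_nf
      _ ≤ c + n * c := (abs_add_le _ _).trans (add_le_add (hadd _ _ (by positivity) hx) ih)
      _ = (n + 1) * c := by ring

lemma abs_map_div_sub_map_div_le (h0 : ψ 0 = 0)
    (hadd : ∀ a b : ℝ, 0 ≤ a → 0 ≤ b → |ψ (a + b) - ψ a - ψ b| ≤ c)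
    (hmono : NondecreasingUpTo ψ η) {x y : ℝ} (hx : 0 < x) (hxy : x ≤ y) :
    |ψ y / y - ψ x / x| ≤ c / x + (c + 2 * |ψ x| + η) / y := by
  have hy : 0 < y := hx.trans_le hxy
  have hc : 0 ≤ c := by simpa [h0] using hadd 0 0 le_rfl le_rfl
  set n := ⌊y / x⌋₊
  have hn : (n : ℝ) ≤ y / x := Nat.floor_le (by positivity)
  have hn' : y / x < n + 1 := Nat.lt_floor_add_one _
  set r := y - n * x
  have hr : 0 ≤ r := by rw [le_div_iff₀ hx] at hn; linarith
  have hrx : r ≤ x := by rw [div_lt_iff₀ hx] at hn'; linarith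
  have hsplit := abs_le.1 (hadd (n * x) r (by positivity) hr)
  rw [show n * x + r = y by ring] at hsplit
  have hmul := abs_le.1 (abs_map_nat_mul_sub_le h0 hadd hx.le n)
  have hnc : n * c ≤ y / x * c := mul_le_mul_of_nonneg_right hn hc
  have hψr₁ : ψ r ≤ ψ x + η := hmono r x hr hrx
  have hψr₂ : -η ≤ ψ r := by linarith [h0 ▸ hmono 0 r le_rfl hr]
  have hfrac : |(y / x - n) * ψ x| ≤ |ψ x| := by
    rw [abs_mul]
    exact mul_le_of_le_one_left (abs_nonneg _) (abs_le.2 ⟨by linarith, by linarith⟩)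
  have hfrac' := abs_le.1 hfrac
  have key : |ψ y - y / x * ψ x| ≤ y / x * c + (c + 2 * |ψ x| + η) := by
    rw [abs_le]; constructor <;> linarith [le_abs_self (ψ x), neg_abs_le (ψ x)]
  have e : ψ y / y - ψ x / x = (ψ y - y / x * ψ x) / y := by field_simp
  rw [e, abs_div, abs_of_pos hy, div_le_iff₀ hy, add_mul, div_mul_cancel₀ _ hy.ne']
  calc |ψ y - y / x * ψ x| ≤ y / x * c + (c + 2 * |ψ x| + η) := key
    _ = c / x * y + (c + 2 * |ψ x| + η) := by ring

lemma map_sub_div_le_map_add_div (h0 : ψ 0 = 0)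
    (hadd : ∀ a b : ℝ, 0 ≤ a → 0 ≤ b → |ψ (a + b) - ψ a - ψ b| ≤ c)
    (hmono : NondecreasingUpTo ψ η) {x x' : ℝ} (hx : 0 < x) (hx' : 0 < x') :
    (ψ x - c) / x ≤ (ψ x' + c) / x' := by
  have hlim : ∀ a b : ℝ, Tendsto (fun y : ℝ => a + b / y) atTop (nhds a) := fun a b => by
    simpa using tendsto_const_nhds (x := a).add (tendsto_const_nhds.div_atTop tendsto_id)
  refine le_of_tendsto_of_tendsto (hlim _ (-(c + 2 * |ψ x| + η)))
    (hlim _ (c + 2 * |ψ x'| + η)) ?_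
  filter_upwards [eventually_ge_atTop (max x x')] with y hy
  have h₁ := abs_le.1 (abs_map_div_sub_map_div_le h0 hadd hmono hx ((le_max_left _ _).trans hy))
  have h₂ := abs_le.1 (abs_map_div_sub_map_div_le h0 hadd hmono hx' ((le_max_right _ _).trans hy))
  rw [sub_div, add_div, neg_div]
  linarith

lemma approxDilation_of_abs_map_add_sub_le (h0 : ψ 0 = 0)
    (hadd : ∀ a b : ℝ, 0 ≤ a → 0 ≤ b → |ψ (a + b) - ψ a - ψ b| ≤ c)
    (hmono : NondecreasingUpTo ψ η) (hub : UnboundedOnNonneg ψ) : ApproxDilation ψ := by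
  have hc : 0 ≤ c := by simpa [h0] using hadd 0 0 le_rfl le_rfl
  set S := (fun x => (ψ x - c) / x) '' Set.Ioi 0
  have hbdd : BddAbove S := ⟨(ψ 1 + c) / 1, by
    rintro _ ⟨x, hx, rfl⟩; exact map_sub_div_le_map_add_div h0 hadd hmono hx one_pos⟩
  have hbound : ∀ x, 0 ≤ x → |ψ x - sSup S * x| ≤ c := by
    intro x hx
    rcases hx.eq_or_lt with rfl | hx
    · simpa [h0] using hc
    have h₁ : (ψ x - c) / x ≤ sSup S := le_csSup hbdd ⟨x, hx, rfl⟩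
    have h₂ : sSup S ≤ (ψ x + c) / x := csSup_le ⟨_, 1, Set.mem_Ioi.2 one_pos, rfl⟩ (by
      rintro _ ⟨x', hx', rfl⟩; exact map_sub_div_le_map_add_div h0 hadd hmono hx' hx)
    rw [div_le_iff₀ hx] at h₁
    rw [le_div_iff₀ hx] at h₂
    rw [abs_le]; constructor <;> linarith
  refine ⟨sSup S, c, ?_, hc, hbound⟩
  by_contra! hS
  obtain ⟨t, ht, hct⟩ := hub c
  nlinarith [(abs_le.1 (hbound t ht)).2]

end RoughlyAdditive

def EventuallyLinearIncrements (φ : ℝ → ℝ) (lam k : ℝ) : Prop :=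
  ∀ a : ℝ, 0 ≤ a → ∀ᶠ m in atTop, |φ (m + a) - φ m - lam * a| ≤ k

lemma EventuallyLinearIncrements.exists_sub_mul_le {φ : ℝ → ℝ} {η lam k : ℝ}
    (hinc : EventuallyLinearIncrements φ lam k) (hmono : NondecreasingUpTo φ η) (hlam : 0 ≤ lam)
    (hk : 0 ≤ k) {ε : ℝ} (hε : 0 < ε) : ∃ A, ∀ᶠ y in atTop, φ y - lam * y ≤ A + ε * y := by
  set S := k / ε + 1
  have hS : 0 < S := by positivity
  have hkS : k / S ≤ ε := by
    rw [div_le_iff₀ hS]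
    linarith [mul_div_cancel₀ k hε.ne', show ε * S = ε * (k / ε) + ε by ring]
  obtain ⟨M, hM⟩ := eventually_atTop.1 ((hinc S hS.le).and (eventually_ge_atTop 0))
  have hM₀ : 0 ≤ M := (hM M le_rfl).2
  have hiter : ∀ j : ℕ, φ (M + j * S) ≤ φ M + j * (lam * S + k) := by
    intro j
    induction j with
    | zero => simp
    | succ j ih =>
      have := (abs_le.1 (hM (M + j * S) (le_add_of_nonneg_right (by positivity))).1).2
      rw [Nat.cast_succ, show M + (j + 1) * S = M + j * S + S by ring]
      linarith
  refine ⟨φ M + η + lam * S + k, ?_⟩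
  filter_upwards [eventually_ge_atTop M] with y hy
  set j := ⌈(y - M) / S⌉₊
  have hj₁ : (y - M) / S ≤ j := Nat.le_ceil _
  have hj₂ : (j : ℝ) < (y - M) / S + 1 := Nat.ceil_lt_add_one (div_nonneg (by linarith) hS.le)
  have hyj : y ≤ M + j * S := by rw [div_le_iff₀ hS] at hj₁; linarith
  have hjS : j * S < y - M + S := by
    rw [← lt_div_iff₀ hS, add_div, div_self hS.ne']; exact hj₂
  have hjk : j * k ≤ ε * y + k := by
    calc j * k ≤ ((y - M) / S + 1) * k := mul_le_mul_of_nonneg_right hj₂.le hk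
      _ = (y - M) * (k / S) + k := by ring
      _ ≤ (y - M) * ε + k := by gcongr
      _ ≤ ε * y + k := by linarith [mul_nonneg hε.le hM₀]
  have := hmono y _ (hM₀.trans hy) hyj
  linarith [hiter j, mul_le_mul_of_nonneg_left hjS.le hlam, mul_nonneg hlam hM₀]

lemma frequently_le_of_two_mul_le {D : ℝ → ℝ} {y₀ C : ℝ} (hy₀ : 0 ≤ y₀)
    (hdouble : ∀ᶠ x in atTop, 2 * D (x + y₀) ≤ D (2 * x + y₀) + C)
    (hsublin : ∀ ε > 0, ∃ A, ∀ᶠ y in atTop, D y ≤ A + ε * y) :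
    ∃ᶠ t in atTop, D t ≤ C + 1 := by
  intro hlarge
  simp only [not_le] at hlarge
  obtain ⟨x₀, hx₀⟩ := eventually_atTop.1 ((hdouble.and hlarge).and (eventually_ge_atTop 1))
  -- Along `u n` the excess `D - C` at least doubles, which sublinearity forbids.
  set u : ℕ → ℝ := fun n => 2 ^ n * x₀ + y₀
  have hx₀1 : 1 ≤ x₀ := (hx₀ x₀ le_rfl).2
  have hpow : ∀ n : ℕ, x₀ ≤ 2 ^ n * x₀ := fun n =>
    le_mul_of_one_le_left (by linarith) (one_le_pow₀ (by norm_num))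
  have hgrow : ∀ n : ℕ, 2 ^ n ≤ D (u n) - C := by
    intro n
    induction n with
    | zero =>
      have := (hx₀ (x₀ + y₀) (by linarith)).1.2
      simp only [u, pow_zero, one_mul]
      linarith
    | succ n ih =>
      have := (hx₀ _ (hpow n)).1.1
      simp only [u, pow_succ] at ih ⊢
      rw [show 2 ^ n * 2 * x₀ = 2 * (2 ^ n * x₀) by ring]
      linarith
  obtain ⟨A, hA⟩ := hsublin (1 / (2 * (x₀ + y₀))) (by positivity)
  obtain ⟨B, hB⟩ := eventually_atTop.1 hA
  obtain ⟨n, hn⟩ := pow_unbounded_of_one_lt (max B (2 * (A - C))) (by norm_num : (1 : ℝ) < 2)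
  have h2n : (1 : ℝ) ≤ 2 ^ n := one_le_pow₀ (by norm_num)
  have hun : 2 ^ n ≤ u n := by
    linarith [le_mul_of_one_le_right (by positivity : (0 : ℝ) ≤ 2 ^ n) hx₀1]
  have hεu : 1 / (2 * (x₀ + y₀)) * u n ≤ 2 ^ n / 2 := by
    rw [div_mul_eq_mul_div, one_mul, div_le_div_iff₀ (by positivity) (by norm_num)]
    linarith [le_mul_of_one_le_left hy₀ h2n]
  have := hB (u n) ((le_max_left _ _).trans (hn.le.trans hun))
  linarith [hgrow n, le_max_right B (2 * (A - C))]

section HalfLine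

variable {φ : ℝ → ℝ} {η Δ : ℝ}

-- The four points are `0 ≤ a ≤ a + b ≤ a + b + c`.
lemma FourPoint.halfLine_mid (h : FourPoint (halfLineDist φ) Δ) {a b c : ℝ} (ha : 0 ≤ a)
    (hb : 0 ≤ b) (hc : 0 ≤ c) :
    φ (a + b) + φ (b + c) ≤ φ a + φ c + Δ ∨
      φ (a + b) + φ (b + c) ≤ φ (a + b + c) + φ b + Δ := by
  have := h ⟨0, le_rfl⟩ ⟨a + b, by positivity⟩ ⟨a, ha⟩ ⟨a + b + c, by positivity⟩
  simp only [halfLineDist, zero_sub, abs_neg, sub_add_cancel_left, add_sub_cancel_left] at this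
  rw [show a - (a + b + c) = -(b + c) by ring, abs_neg, abs_of_nonneg ha, abs_of_nonneg hb,
    abs_of_nonneg hc, abs_of_nonneg (by positivity : 0 ≤ a + b),
    abs_of_nonneg (by positivity : 0 ≤ b + c), abs_of_nonneg (by positivity : 0 ≤ a + b + c)]
    at this
  exact (le_max_iff.1 (sub_le_iff_le_add.2 this)).imp (fun h => by linarith) fun h => by linarith

lemma FourPoint.halfLine_outer (h : FourPoint (halfLineDist φ) Δ) {a b c : ℝ} (ha : 0 ≤ a)
    (hb : 0 ≤ b) (hc : 0 ≤ c) :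
    φ (a + b + c) + φ b ≤ φ a + φ c + Δ ∨
      φ (a + b + c) + φ b ≤ φ (a + b) + φ (b + c) + Δ := by
  have := h ⟨0, le_rfl⟩ ⟨a + b + c, by positivity⟩ ⟨a, ha⟩ ⟨a + b, by positivity⟩
  simp only [halfLineDist, zero_sub, abs_neg, sub_add_cancel_left, add_sub_cancel_left] at this
  rw [show a + b + c - a = b + c by ring, abs_of_nonneg ha, abs_of_nonneg hb,
    abs_of_nonneg hc, abs_of_nonneg (by positivity : 0 ≤ a + b),
    abs_of_nonneg (by positivity : 0 ≤ b + c), abs_of_nonneg (by positivity : 0 ≤ a + b + c)]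
    at this
  exact (le_max_iff.1 (sub_le_iff_le_add.2 this)).imp (fun h => by linarith) fun h => by linarith

lemma FourPoint.halfLine_add_le (hfp : FourPoint (halfLineDist φ) Δ)
    (hmono : NondecreasingUpTo φ η) {t x : ℝ} (ht : 0 ≤ t) (hx : t ≤ x)
    (hgap : Δ + η < φ (2 * t) - φ t) : φ x + (φ (2 * t) - φ t) - Δ ≤ φ (x + t) := by
  have h := hfp.halfLine_mid ht ht (sub_nonneg.2 hx)
  rw [show t + t + (x - t) = x + t by ring, add_sub_cancel, ← two_mul] at h
  rcases h with h | h
  · linarith [hmono (x - t) x (by linarith) (by linarith)]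
  · linarith

lemma tendsto_atTop_of_add_le (hmono : NondecreasingUpTo φ η) {x₀ t g : ℝ} (hx₀ : 0 ≤ x₀)
    (ht : 0 ≤ t) (hg : 0 < g) (hstep : ∀ x, x₀ ≤ x → φ x + g ≤ φ (x + t)) :
    Tendsto φ atTop atTop := by
  have hiter : ∀ n : ℕ, φ x₀ + n * g ≤ φ (x₀ + n * t) := by
    intro n
    induction n with
    | zero => simp
    | succ n ih =>
      have := hstep (x₀ + n * t) (le_add_of_nonneg_right (by positivity))
      rw [Nat.cast_succ, show x₀ + (n + 1) * t = x₀ + n * t + t by ring]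
      linarith
  rw [tendsto_atTop_atTop]
  intro b
  obtain ⟨n, hn⟩ := exists_nat_gt ((b + η - φ x₀) / g)
  refine ⟨x₀ + n * t, fun m hm => ?_⟩
  rw [div_lt_iff₀ hg] at hn
  linarith [hiter n, hmono _ m (by positivity) hm]

lemma exists_gap_of_not_logarithmLike (hlog : ¬LogarithmLike φ) (C : ℝ) :
    ∃ t, 0 ≤ t ∧ C < φ (2 * t) - φ t := by
  by_contra! h
  exact hlog ⟨C, h⟩

lemma FourPoint.halfLine_tendsto_atTop (hfp : FourPoint (halfLineDist φ) Δ)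
    (hmono : NondecreasingUpTo φ η) (hlog : ¬LogarithmLike φ) : Tendsto φ atTop atTop := by
  obtain ⟨t, ht, hgap⟩ := exists_gap_of_not_logarithmLike hlog (Δ + η)
  exact tendsto_atTop_of_add_le hmono ht ht (g := φ (2 * t) - φ t - Δ)
    (by linarith [hmono.nonneg]) fun x hx => by linarith [hfp.halfLine_add_le hmono ht hx hgap]

lemma FourPoint.halfLine_abs_increment_sub_le (hfp : FourPoint (halfLineDist φ) Δ)
    (hmono : NondecreasingUpTo φ η) {a m m' : ℝ} (ha : 0 ≤ a) (hm : 0 ≤ m) (hmm' : m ≤ m')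
    (hlarge : φ a + Δ + 2 * η < φ m) : |(φ (m' + a) - φ m') - (φ (m + a) - φ m)| ≤ Δ := by
  obtain ⟨c, hc, rfl⟩ : ∃ c, 0 ≤ c ∧ m' = m + c := ⟨m' - m, by linarith, by ring⟩
  -- `hlarge` rules out the alternative of each four-point instance that would bound `φ m`.
  have hη := hmono.nonneg
  have hma := hmono m (m + a) hm (by linarith)
  have hcm := hmono c (m + c) hc (by linarith)
  have hca := hmono c (m + c + a) hc (by linarith)
  have h₁ := hfp.halfLine_mid ha hm hc
  have h₂ := hfp.halfLine_outer hc hm ha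
  rw [add_comm a m, show m + a + c = m + c + a by ring] at h₁
  rw [add_comm c m] at h₂
  rw [abs_le]
  constructor
  · rcases h₁ with h | h <;> linarith
  · rcases h₂ with h | h <;> linarith

lemma FourPoint.halfLine_approxDilation_increment (hfp : FourPoint (halfLineDist φ) Δ)
    (hmono : NondecreasingUpTo φ η) (hlog : ¬LogarithmLike φ) {M : ℝ → ℝ}
    (hM₀ : ∀ a, 0 ≤ M a) (hM : ∀ a m, M a ≤ m → φ a + Δ + 2 * η < φ m) :
    ApproxDilation fun a => φ (M a + a) - φ (M a) := by
  have hL : ∀ a m, 0 ≤ a → M a ≤ m → |(φ (m + a) - φ m) - (φ (M a + a) - φ (M a))| ≤ Δ :=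
    fun a m ha hm => hfp.halfLine_abs_increment_sub_le hmono ha (hM₀ a) hm (hM a _ le_rfl)
  refine approxDilation_of_abs_map_add_sub_le (c := 3 * Δ) (η := η + 2 * Δ) (by simp)
    (fun a b ha hb => ?_) (fun a b ha hab => ?_) fun B => ?_
  · set m := max (M a) (max (M b) (M (a + b)))
    have h₁ := abs_le.1 (hL (a + b) m (by positivity) (by simp [m]))
    have h₂ := abs_le.1 (hL b m hb (by simp [m]))
    have h₃ := abs_le.1 (hL a (m + b) ha ((le_max_left _ _).trans (le_add_of_nonneg_right hb)))
    rw [show m + (a + b) = m + b + a by ring] at h₁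
    rw [abs_le]; constructor <;> linarith
  · set m := max (M a) (M b)
    have h₁ := abs_le.1 (hL a m ha (le_max_left _ _))
    have h₂ := abs_le.1 (hL b m (ha.trans hab) (le_max_right _ _))
    have hm : 0 ≤ m := (hM₀ a).trans (le_max_left _ _)
    linarith [hmono (m + a) (m + b) (by positivity) (by linarith)]
  · obtain ⟨t, ht, hgap⟩ := exists_gap_of_not_logarithmLike hlog (max (Δ + η) (B + 2 * Δ))
    set m := max (M t) t
    have h₁ := hfp.halfLine_add_le hmono ht (le_max_right (M t) t)
      ((le_max_left _ _).trans_lt hgap)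
    have h₂ := abs_le.1 (hL t m ht (le_max_left _ _))
    exact ⟨t, ht, by linarith [le_max_right (Δ + η) (B + 2 * Δ)]⟩

lemma FourPoint.halfLine_eventuallyLinearIncrements (hfp : FourPoint (halfLineDist φ) Δ)
    (hmono : NondecreasingUpTo φ η) (hlog : ¬LogarithmLike φ) :
    ∃ lam k, 0 < lam ∧ 0 ≤ k ∧ EventuallyLinearIncrements φ lam k := by
  have hthreshold : ∀ a, ∃ M, 0 ≤ M ∧ ∀ m, M ≤ m → φ a + Δ + 2 * η < φ m := fun a => by
    obtain ⟨M, hM⟩ := eventually_atTop.1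
      (((hfp.halfLine_tendsto_atTop hmono hlog).eventually_gt_atTop _).and
        (eventually_ge_atTop 0))
    exact ⟨M, (hM M le_rfl).2, fun m hm => (hM m hm).1⟩
  choose M hM₀ hM using hthreshold
  obtain ⟨lam, k, hlam, hk, hL⟩ := hfp.halfLine_approxDilation_increment hmono hlog hM₀ hM
  refine ⟨lam, Δ + k, hlam, by linarith [hfp.nonneg ⟨0, le_rfl⟩], fun a ha => ?_⟩
  filter_upwards [eventually_ge_atTop (M a)] with m hm
  have h₁ := abs_le.1 (hfp.halfLine_abs_increment_sub_le hmono ha (hM₀ a) hm (hM a _ le_rfl))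
  have h₂ := abs_le.1 (hL a ha)
  rw [abs_le]; constructor <;> linarith

lemma FourPoint.halfLine_two_mul_le (hfp : FourPoint (halfLineDist φ) Δ) {x y : ℝ} (hx : 0 ≤ x)
    (hy : 0 ≤ y) (hinc : Δ < 2 * (φ (x + y) - φ x)) :
    2 * φ (x + y) ≤ φ (2 * x + y) + φ y + Δ := by
  have h := hfp.halfLine_mid hx hy hx
  rw [add_comm y x, show x + y + x = 2 * x + y by ring] at h
  rcases h with h | h <;> linarith

lemma FourPoint.halfLine_sub_map_add_le (hfp : FourPoint (halfLineDist φ) Δ)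
    (hmono : NondecreasingUpTo φ η) {C : ℝ} (hC : ∃ᶠ t in atTop, 2 * φ t - φ (2 * t) ≤ C)
    {a b : ℝ} (ha : 0 ≤ a) (hb : 0 ≤ b) : φ a + φ b - φ (a + b) ≤ C + 2 * Δ + 4 * η := by
  obtain ⟨t, htC, hta, htb⟩ :=
    (hC.and_eventually ((eventually_ge_atTop a).and (eventually_ge_atTop b))).exists
  have hη := hmono.nonneg
  have hatb : φ a + φ t - φ (t + a) ≤ C + Δ + 2 * η := by
    have h := hfp.halfLine_outer (sub_nonneg.2 hta) ha (ha.trans hta)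
    rw [sub_add_cancel, ← two_mul, add_comm a t] at h
    have h₁ := hmono (t - a) t (by linarith) (by linarith)
    have h₂ := hmono t (t + a) (ha.trans hta) (by linarith)
    rcases h with h | h <;> linarith
  have h := hfp.halfLine_outer ha hb (sub_nonneg.2 htb)
  rw [show a + b + (t - b) = t + a by ring, add_sub_cancel] at h
  have h₁ := hmono (t - b) t (by linarith) (by linarith)
  have h₂ := hmono a (a + b) ha (by linarith)
  rcases h with h | h <;> linarith

theorem FourPoint.halfLine_logarithmLike_or_approxDilation (hfp : FourPoint (halfLineDist φ) Δ)
    (hmono : NondecreasingUpTo φ η) (h0 : φ 0 = 0)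
    (hsub : ∀ a b : ℝ, 0 ≤ a → 0 ≤ b → φ (a + b) ≤ φ a + φ b) (hub : UnboundedOnNonneg φ) :
    LogarithmLike φ ∨ ApproxDilation φ := by
  refine or_iff_not_imp_left.2 fun hlog => ?_
  obtain ⟨lam, k, hlam, hk, hinc⟩ := hfp.halfLine_eventuallyLinearIncrements hmono hlog
  have hlow : ∀ a, 0 ≤ a → lam * a - k ≤ φ a := fun a ha => by
    obtain ⟨m, hm, hm₀⟩ := ((hinc a ha).and (eventually_ge_atTop 0)).exists
    linarith [(abs_le.1 hm).1, hsub m a hm₀ ha]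
  have hΔ := hfp.nonneg ⟨0, le_rfl⟩
  -- Increments of `φ` over length `y₀` exceed `Δ / 2`, as `halfLine_two_mul_le` requires.
  set y₀ := (k + Δ + 1) / lam
  have hy₀ : 0 ≤ y₀ := by positivity
  have hlamy₀ : lam * y₀ = k + Δ + 1 := mul_div_cancel₀ _ hlam.ne'
  have hdouble : ∀ᶠ x in atTop, 2 * (φ (x + y₀) - lam * (x + y₀)) ≤
      φ (2 * x + y₀) - lam * (2 * x + y₀) + (φ y₀ + Δ - lam * y₀) := by
    filter_upwards [hinc y₀ hy₀, eventually_ge_atTop 0] with x hx hx₀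
    have := hfp.halfLine_two_mul_le hx₀ hy₀ (by linarith [(abs_le.1 hx).1])
    linarith
  have hfreq := frequently_le_of_two_mul_le hy₀ hdouble
    fun ε hε => hinc.exists_sub_mul_le hmono hlam.le hk hε
  obtain ⟨C₀, hsup⟩ : ∃ C₀, ∀ a b : ℝ, 0 ≤ a → 0 ≤ b → φ a + φ b - φ (a + b) ≤ C₀ :=
    ⟨_, fun a b => hfp.halfLine_sub_map_add_le hmono (C := 2 * (φ y₀ + Δ - lam * y₀ + 1) + k) <|
      (hfreq.and_eventually (eventually_ge_atTop 0)).mono fun t ⟨ht, ht₀⟩ => by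
        linarith [hlow (2 * t) (by positivity)]⟩
  have hC₀ : 0 ≤ C₀ := by simpa [h0] using hsup 0 0 le_rfl le_rfl
  refine approxDilation_of_abs_map_add_sub_le (c := C₀) h0
    (fun a b ha hb => abs_le.2 ⟨?_, ?_⟩) hmono hub
  · linarith [hsup a b ha hb]
  · linarith [hsub a b ha hb]

end HalfLine

lemma approxUltrametric_of_logarithmLike {X : Type*} [PseudoMetricSpace X] {φ : ℝ → ℝ}
    {η : ℝ} (hmono : NondecreasingUpTo φ η) (hlog : LogarithmLike φ) :
    ApproxUltrametric fun x y : X => φ (dist x y) := by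
  obtain ⟨C, hC⟩ := hlog
  refine ⟨max C 0 + η, by positivity [hmono.nonneg], fun x y z => ?_⟩
  set m := max (dist x z) (dist z y)
  have hm : 0 ≤ m := dist_nonneg.trans (le_max_left _ _)
  have hφm : φ m ≤ max (φ (dist x z)) (φ (dist z y)) := by
    rcases max_choice (dist x z) (dist z y) with h | h <;> simp [m, h]
  have hxy : dist x y ≤ 2 * m := by
    linarith [dist_triangle x z y, le_max_left (dist x z) (dist z y),
      le_max_right (dist x z) (dist z y)]
  linarith [hmono _ _ dist_nonneg hxy, hC m hm, le_max_left C 0]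

lemma IsGromovHyp.of_approxDilation {X : Type*} {d : X → X → ℝ} {φ : ℝ → ℝ}
    (hd : ∀ x y, 0 ≤ d x y) (hdil : ApproxDilation φ) (h : IsGromovHyp fun x y => φ (d x y)) :
    IsGromovHyp d := by
  obtain ⟨lam, k, hlam, hk, hφ⟩ := hdil
  obtain ⟨δ, hδ, hhyp⟩ := h
  have hprod : ∀ w a b, |gromovProd (fun x y => φ (d x y)) w a b - lam * gromovProd d w a b| ≤
      3 / 2 * k := by
    intro w a b
    have h₁ := abs_le.1 (hφ _ (hd a w))
    have h₂ := abs_le.1 (hφ _ (hd b w))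
    have h₃ := abs_le.1 (hφ _ (hd a b))
    simp only [gromovProd]
    rw [abs_le]; constructor <;> linarith
  refine ⟨(δ + 3 * k) / lam, by positivity, fun w x y z => ?_⟩
  have hxz := abs_le.1 (hprod w x z)
  have hyz := abs_le.1 (hprod w y z)
  have hxy := abs_le.1 (hprod w x y)
  have hmin : lam * min (gromovProd d w x z) (gromovProd d w y z) ≤
      min (gromovProd (fun x y => φ (d x y)) w x z) (gromovProd (fun x y => φ (d x y)) w y z) +
        3 / 2 * k := by
    rw [mul_min_of_nonneg _ _ hlam.le, ← min_add_add_right]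
    exact min_le_min (by linarith) (by linarith)
  have key : min (gromovProd d w x z) (gromovProd d w y z) - gromovProd d w x y ≤
      (δ + 3 * k) / lam := by
    rw [le_div_iff₀ hlam]
    linarith [hhyp w x y z]
  linarith

lemma not_approxDilation_and_approxUltrametric {X : Type*} [PseudoMetricSpace X] {φ : ℝ → ℝ}
    (hray : HasRoughGeodesicRay X fun x y => dist x y) :
    ¬(ApproxDilation φ ∧ ApproxUltrametric fun x y : X => φ (dist x y)) := by
  rintro ⟨⟨lam, k', hlam, hk', hφ⟩, δ, hδ, hult⟩
  obtain ⟨k, hk, γ, hγ⟩ := hray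
  have hbound : ∀ T, 0 ≤ T → lam * T ≤ 2 * lam * k + 2 * k' + δ := by
    intro T hT
    have h₁ := (hγ (2 * T) 0 (by positivity) le_rfl).1
    have h₂ := (hγ (2 * T) T (by positivity) hT).2
    have h₃ := (hγ T 0 hT le_rfl).2
    rw [sub_zero, abs_of_nonneg (by positivity)] at h₁
    rw [show 2 * T - T = T by ring, abs_of_nonneg hT] at h₂
    rw [sub_zero, abs_of_nonneg hT] at h₃
    have e₁ := abs_le.1 (hφ _ (dist_nonneg (x := γ (2 * T)) (y := γ 0)))
    have e₂ := abs_le.1 (hφ _ (dist_nonneg (x := γ (2 * T)) (y := γ T)))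
    have e₃ := abs_le.1 (hφ _ (dist_nonneg (x := γ T) (y := γ 0)))
    have hmax : max (φ (dist (γ (2 * T)) (γ T))) (φ (dist (γ T) (γ 0))) ≤
        lam * (T + k) + k' :=
      max_le (by linarith [mul_le_mul_of_nonneg_left h₂ hlam.le])
        (by linarith [mul_le_mul_of_nonneg_left h₃ hlam.le])
    linarith [hult (γ (2 * T)) (γ 0) (γ T), mul_le_mul_of_nonneg_left h₁ hlam.le]
  have := hbound ((2 * lam * k + 2 * k' + δ) / lam + 1) (by positivity)
  rw [mul_add, mul_div_cancel₀ _ hlam.ne'] at this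
  linarith

theorem stmt_1_general {X : Type} [MetricSpace X]
    (hray : HasRoughGeodesicRay X (fun x y : X => dist x y))
    (φ : ℝ → ℝ)
    (hmt : IsMetricTransform φ)
    (hand : ApproxNondecreasing φ)
    (hub : UnboundedOnNonneg φ)
    (hhyp : IsGromovHyp (fun x y : X => φ (dist x y))) :
    ((IsGromovHyp (fun x y : X => dist x y) ∧ ApproxDilation φ) ∨
        ApproxUltrametric (fun x y : X => φ (dist x y))) ∧
      ¬((IsGromovHyp (fun x y : X => dist x y) ∧ ApproxDilation φ) ∧
        ApproxUltrametric (fun x y : X => φ (dist x y))) := by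
  obtain ⟨η, -, hmono⟩ := hand
  have ⟨δ, _, hδ⟩ := hhyp
  have hsub : ∀ a b : ℝ, 0 ≤ a → 0 ≤ b → φ (a + b) ≤ φ a + φ b := fun _ _ => hmt.map_add_le
  obtain ⟨Δ, hfp⟩ := hray.fourPoint_halfLine hmono hsub hδ.fourPoint
  refine ⟨?_, fun h => not_approxDilation_and_approxUltrametric hray ⟨h.1.2, h.2⟩⟩
  rcases hfp.halfLine_logarithmLike_or_approxDilation hmono hmt.map_zero hsub hub with hlog | hdil
  · exact .inr (approxUltrametric_of_logarithmLike hmono hlog)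
  · exact .inl ⟨IsGromovHyp.of_approxDilation (fun _ _ => dist_nonneg) hdil hhyp, hdil⟩

/-- Theorem B. -/
theorem stmt_1 {X : Type} [MetricSpace X]
    (hray : HasRoughGeodesicRay X (fun x y : X => dist x y))
    (φ : ℝ → ℝ)
    (hnonneg : ∀ t : ℝ, 0 ≤ t → 0 ≤ φ t)
    (hmt : IsMetricTransform φ)
    (hand : ApproxNondecreasing φ)
    (hub : UnboundedOnNonneg φ)
    (hhyp : IsGromovHyp (fun x y : X => φ (dist x y))) :
    ((IsGromovHyp (fun x y : X => dist x y) ∧ ApproxDilation φ) ∨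
        ApproxUltrametric (fun x y : X => φ (dist x y))) ∧
      ¬((IsGromovHyp (fun x y : X => dist x y) ∧ ApproxDilation φ) ∧
        ApproxUltrametric (fun x y : X => φ (dist x y))) :=
  stmt_1_general hray φ hmt hand hub hhyp
end

section
/- Let φ : [0,∞) → [0,∞) be an unbounded concave function with φ(0) = 0 and lim_{t→0+} φ(t) = 0. Then the transformed Euclidean half line ([0,∞), |·|_φ) is Gromov hyperbolic if and only if either (i) there exist λ > 0 and a nonnegative, bounded, continuous concave function f : [0,∞) → [0,∞) with f(0) = 0 such that φ(x) = λx + f(x) for all x ≥ 0, or (ii) the function x ↦ φ(2x) − φ(x) is bounded. -/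
open Set Filter

/-!
Let `Λ = inf_{u > 0} φ(u)/u`, the asymptotic slope of `φ`. By concavity, every increment
`φ(b) - φ(a)` is at least `Λ (b - a)`, whereas far out the increments over a fixed length `t`
are at most `Λ t + ε`.

If `Λ = 0`, the four-point condition at `0 ≤ t ≤ 2t ≤ u`, with `u` far out, bounds
`φ(2t) - φ(t)`. If `Λ > 0`, write `S = φ(t) - Λ t`, `m = S / (2Λ)` and pick `C` with
`φ(m) ≤ 2Λ m + C`. The condition at `0 ≤ t - m ≤ t ≤ X`, with `X` far out, gives
`S ≤ 2δ + 1 + φ(m) - Λ m ≤ 2δ + 1 + S/2 + C`, which bounds `S`.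

Conversely, in case (i) `|·|_φ` differs by a bounded amount from the 0-hyperbolic metric
`λ |x - y|`. In case (ii) the doubling bound makes `|·|_φ` an approximate ultrametric, and
approximate ultrametrics are hyperbolic.
-/

/-- For concave `φ` with `φ 0 = 0`, `φ u / u` decreases to this value, which is also the limit `λ`
at infinity of the left derivative. -/
noncomputable def asymptoticSlope (φ : ℝ → ℝ) : ℝ :=
  sInf ((fun u => φ u / u) '' Ioi 0)

section ConcaveOnHalfLine

variable {φ : ℝ → ℝ}

lemma ConcaveOn.div_le_div_of_map_zero (hconc : ConcaveOn ℝ (Ici 0) φ) (h0 : φ 0 = 0)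
    {u v : ℝ} (hu : 0 < u) (huv : u ≤ v) : φ v / v ≤ φ u / u := by
  have := hconc.slope_anti (x := 0) self_mem_Ici ⟨mem_Ici.2 hu.le, hu.ne'⟩
    ⟨mem_Ici.2 (hu.le.trans huv), (hu.trans_le huv).ne'⟩ huv
  simpa [slope_def_field, h0] using this

lemma ConcaveOn.sub_le_mul_div_of_map_zero (hconc : ConcaveOn ℝ (Ici 0) φ) (h0 : φ 0 = 0)
    {t u : ℝ} (ht : 0 ≤ t) (htu : t ≤ u) : φ u - φ (u - t) ≤ t * (φ u / u) := by
  rcases ht.eq_or_lt with rfl | ht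
  · simp
  have hu := ht.trans_le htu
  have := hconc.slope_anti (x := u) (mem_Ici.2 hu.le) ⟨self_mem_Ici, hu.ne⟩
    ⟨mem_Ici.2 (sub_nonneg.2 htu), by simp [ht.ne']⟩ (sub_nonneg.2 htu)
  rw [slope_def_field, slope_def_field, h0, show u - t - u = -t by ring] at this
  calc φ u - φ (u - t) = t * ((φ (u - t) - φ u) / -t) := by field_simp; ring
    _ ≤ t * ((0 - φ u) / (0 - u)) := by gcongr
    _ = t * (φ u / u) := by rw [zero_sub, zero_sub, neg_div_neg_eq]

lemma zero_mem_lowerBounds_div_self_image (hnonneg : ∀ t : ℝ, 0 ≤ t → 0 ≤ φ t) :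
    0 ∈ lowerBounds ((fun u => φ u / u) '' Ioi 0) := by
  rintro _ ⟨u, hu, rfl⟩
  exact div_nonneg (hnonneg u hu.le) hu.le

lemma asymptoticSlope_nonneg (hnonneg : ∀ t : ℝ, 0 ≤ t → 0 ≤ φ t) :
    0 ≤ asymptoticSlope φ :=
  le_csInf ((nonempty_Ioi).image _) (zero_mem_lowerBounds_div_self_image hnonneg)

lemma asymptoticSlope_mul_le (hnonneg : ∀ t : ℝ, 0 ≤ t → 0 ≤ φ t) (h0 : φ 0 = 0) {u : ℝ}
    (hu : 0 ≤ u) : asymptoticSlope φ * u ≤ φ u := by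
  rcases hu.eq_or_lt with rfl | hu
  · simp [h0]
  rw [← le_div_iff₀ hu]
  exact csInf_le ⟨0, zero_mem_lowerBounds_div_self_image hnonneg⟩ ⟨u, hu, rfl⟩

lemma ConcaveOn.exists_forall_ge_div_lt_asymptoticSlope_add
    (hconc : ConcaveOn ℝ (Ici 0) φ) (h0 : φ 0 = 0) {ε : ℝ} (hε : 0 < ε) :
    ∃ u₀ > 0, ∀ u ≥ u₀, φ u / u < asymptoticSlope φ + ε := by
  obtain ⟨_, ⟨u₀, hu₀, rfl⟩, hlt⟩ :=
    exists_lt_of_csInf_lt ((nonempty_Ioi).image _) (lt_add_of_pos_right (asymptoticSlope φ) hε)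
  exact ⟨u₀, hu₀, fun u hu => (hconc.div_le_div_of_map_zero h0 hu₀ hu).trans_lt hlt⟩

lemma ConcaveOn.asymptoticSlope_mul_sub_le (hconc : ConcaveOn ℝ (Ici 0) φ)
    (hnonneg : ∀ t : ℝ, 0 ≤ t → 0 ≤ φ t) (h0 : φ 0 = 0) {a b : ℝ} (ha : 0 ≤ a) (hab : a ≤ b) :
    asymptoticSlope φ * (b - a) ≤ φ b - φ a := by
  rcases hab.eq_or_lt with rfl | hab
  · simp
  set Λ := asymptoticSlope φ
  rw [← le_div_iff₀ (sub_pos.2 hab)]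
  have hlim : Tendsto (fun v => Λ + (Λ * a - φ a) / (v - a)) atTop (nhds Λ) := by
    simpa [sub_eq_add_neg] using tendsto_const_nhds.add
      (tendsto_const_nhds.div_atTop (tendsto_atTop_add_const_right _ (-a) tendsto_id))
  refine le_of_tendsto hlim ((eventually_gt_atTop b).mono fun v hbv => ?_)
  have hav : 0 < v - a := by linarith
  have hslope := hconc.slope_anti (x := a) ha ⟨mem_Ici.2 (ha.trans hab.le), hab.ne'⟩
    ⟨mem_Ici.2 (ha.trans (hab.trans hbv).le), (hab.trans hbv).ne'⟩ hbv.le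
  rw [slope_def_field, slope_def_field] at hslope
  refine le_trans ?_ hslope
  rw [← sub_nonneg,
    show Λ + (Λ * a - φ a) / (v - a) = (Λ * v - φ a) / (v - a) by field_simp; ring, ← sub_div]
  have := asymptoticSlope_mul_le hnonneg h0 (ha.trans (hab.trans hbv).le)
  exact div_nonneg (by linarith) hav.le

lemma ConcaveOn.monotoneOn_Ici_of_nonneg (hconc : ConcaveOn ℝ (Ici 0) φ)
    (hnonneg : ∀ t : ℝ, 0 ≤ t → 0 ≤ φ t) (h0 : φ 0 = 0) : MonotoneOn φ (Ici 0) :=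
  fun a ha b _ hab => by
    have := hconc.asymptoticSlope_mul_sub_le hnonneg h0 ha hab
    linarith [mul_nonneg (asymptoticSlope_nonneg hnonneg) (sub_nonneg.2 hab)]

lemma ConcaveOn.exists_le_asymptoticSlope_add_mul_add
    (hconc : ConcaveOn ℝ (Ici 0) φ) (hnonneg : ∀ t : ℝ, 0 ≤ t → 0 ≤ φ t) (h0 : φ 0 = 0)
    {ε : ℝ} (hε : 0 < ε) :
    ∃ C, ∀ t : ℝ, 0 ≤ t → φ t ≤ (asymptoticSlope φ + ε) * t + C := by
  obtain ⟨u₀, hu₀, hslope⟩ := hconc.exists_forall_ge_div_lt_asymptoticSlope_add h0 hε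
  have hΛε : 0 ≤ asymptoticSlope φ + ε := by linarith [asymptoticSlope_nonneg hnonneg]
  refine ⟨φ u₀, fun t ht => ?_⟩
  rcases le_total u₀ t with hut | htu
  · have := hslope t hut
    rw [div_lt_iff₀ (hu₀.trans_le hut)] at this
    linarith [hnonneg u₀ hu₀.le]
  · have := hconc.monotoneOn_Ici_of_nonneg hnonneg h0 ht hu₀.le htu
    linarith [mul_nonneg hΛε ht]

lemma ConcaveOn.exists_ge_sub_le_asymptoticSlope_mul_add (hconc : ConcaveOn ℝ (Ici 0) φ)
    (h0 : φ 0 = 0) {t ε : ℝ} (ht : 0 ≤ t) (hε : 0 < ε) (T : ℝ) :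
    ∃ u ≥ T, φ u - φ (u - t) ≤ asymptoticSlope φ * t + ε := by
  obtain ⟨u₀, hu₀, hslope⟩ :=
    hconc.exists_forall_ge_div_lt_asymptoticSlope_add h0 (div_pos hε (by linarith : 0 < t + 1))
  refine ⟨max T (max t u₀), le_max_left _ _, ?_⟩
  set u := max T (max t u₀)
  have htu : t ≤ u := (le_max_left _ _).trans (le_max_right _ _)
  have hu₀u : u₀ ≤ u := (le_max_right _ _).trans (le_max_right _ _)
  have hsmall : t * (ε / (t + 1)) ≤ ε := by
    rw [mul_div_assoc', div_le_iff₀ (by linarith)]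
    nlinarith
  calc φ u - φ (u - t) ≤ t * (φ u / u) := hconc.sub_le_mul_div_of_map_zero h0 ht htu
    _ ≤ t * (asymptoticSlope φ + ε / (t + 1)) := by gcongr; exact (hslope u hu₀u).le
    _ ≤ asymptoticSlope φ * t + ε := by linarith

end ConcaveOnHalfLine

section GromovHyperbolic

variable {X Y : Type*} {d d' : X → X → ℝ} {δ K : ℝ}

lemma IsDeltaHyp.comp (h : IsDeltaHyp d δ) (g : Y → X) :
    IsDeltaHyp (fun x y => d (g x) (g y)) δ :=
  fun w x y z => h (g w) (g x) (g y) (g z)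

lemma IsDeltaHyp.const_mul (h : IsDeltaHyp d δ) {c : ℝ} (hc : 0 ≤ c) :
    IsDeltaHyp (fun x y => c * d x y) (c * δ) := by
  intro w x y z
  have hprod : ∀ a b, gromovProd (fun x y => c * d x y) w a b = c * gromovProd d w a b :=
    fun a b => by simp only [gromovProd]; ring
  rw [hprod, hprod, hprod, ← mul_min_of_nonneg _ _ hc, ← mul_sub]
  exact mul_le_mul_of_nonneg_left (h w x y z) hc

lemma IsDeltaHyp.of_abs_sub_le (h : IsDeltaHyp d δ) (hK : ∀ x y, |d' x y - d x y| ≤ K) :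
    IsDeltaHyp d' (δ + 3 * K) := by
  have hprod : ∀ w x y, |gromovProd d' w x y - gromovProd d w x y| ≤ 3 * K / 2 := by
    intro w x y
    have h₁ := abs_le.1 (hK x w)
    have h₂ := abs_le.1 (hK y w)
    have h₃ := abs_le.1 (hK x y)
    simp only [gromovProd]
    rw [abs_le]
    constructor <;> linarith
  intro w x y z
  have hmin : min (gromovProd d' w x z) (gromovProd d' w y z) ≤
      min (gromovProd d w x z) (gromovProd d w y z) + 3 * K / 2 := by
    rw [← min_add_add_right]
    exact min_le_min (by linarith [(abs_le.1 (hprod w x z)).2])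
      (by linarith [(abs_le.1 (hprod w y z)).2])
  linarith [h w x y z, (abs_le.1 (hprod w x y)).1]

lemma isDeltaHyp_abs_sub : IsDeltaHyp (fun x y : ℝ => |x - y|) 0 := by
  intro w x y z
  simp only [gromovProd, sub_zero, min_le_iff]
  rcases abs_cases (x - w) with ⟨h1, h1'⟩ | ⟨h1, h1'⟩ <;>
  rcases abs_cases (y - w) with ⟨h2, h2'⟩ | ⟨h2, h2'⟩ <;>
  rcases abs_cases (z - w) with ⟨h3, h3'⟩ | ⟨h3, h3'⟩ <;>
  rcases abs_cases (x - z) with ⟨h4, h4'⟩ | ⟨h4, h4'⟩ <;>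
  rcases abs_cases (y - z) with ⟨h5, h5'⟩ | ⟨h5, h5'⟩ <;>
  rcases abs_cases (x - y) with ⟨h6, h6'⟩ | ⟨h6, h6'⟩ <;>
  first
  | exact Or.inl (by linarith)
  | exact Or.inr (by linarith)

lemma isGromovHyp_of_approxUltrametric (hsymm : ∀ x y, d x y = d y x)
    (hd : ApproxUltrametric d) : IsGromovHyp d := by
  obtain ⟨δ, hδ, hultra⟩ := hd
  refine ⟨3 * δ / 2, by positivity, fun w x y z => ?_⟩
  have h₁ := hultra x y z
  have h₂ := hultra z w y
  have h₃ := hultra z w x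
  have h₄ := hultra x z w
  have h₅ := hultra y z w
  have h₆ := hultra x y w
  rw [hsymm z y] at h₁ h₂
  rw [hsymm z x] at h₃
  rw [hsymm w z] at h₄ h₅
  rw [hsymm w y] at h₆
  simp only [← sub_le_iff_le_add, le_max_iff] at h₁ h₂ h₃ h₄ h₅ h₆
  rw [sub_le_iff_le_add, min_le_iff]
  simp only [gromovProd]
  rcases h₁ with h₁ | h₁ <;> rcases h₂ with h₂ | h₂ <;> rcases h₃ with h₃ | h₃ <;>
  rcases h₄ with h₄ | h₄ <;> rcases h₅ with h₅ | h₅ <;> rcases h₆ with h₆ | h₆ <;>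
  rcases le_total (d x z) (d y z) with h₇ | h₇ <;>
  first
  | exact Or.inl (by linarith)
  | exact Or.inr (by linarith)

end GromovHyperbolic

section HalfLine

variable {φ : ℝ → ℝ}

lemma halfLineDist_comm (x y : {t : ℝ // 0 ≤ t}) :
    halfLineDist φ x y = halfLineDist φ y x := by
  rw [halfLineDist, halfLineDist, abs_sub_comm]

lemma approxUltrametric_halfLineDist (hmono : MonotoneOn φ (Ici 0)) (hlog : LogarithmLike φ) :
    ApproxUltrametric (halfLineDist φ) := by
  obtain ⟨C, hC⟩ := hlog
  refine ⟨max C 0, le_max_right _ _, fun x y z => ?_⟩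
  set m := max |x.1 - z.1| |z.1 - y.1|
  have hm : 0 ≤ m := (abs_nonneg _).trans (le_max_left _ _)
  have hxy : |x.1 - y.1| ≤ 2 * m := by
    linarith [abs_sub_le x.1 z.1 y.1, le_max_left |x.1 - z.1| |z.1 - y.1|,
      le_max_right |x.1 - z.1| |z.1 - y.1|]
  calc halfLineDist φ x y ≤ φ (2 * m) :=
        hmono (mem_Ici.2 (abs_nonneg _)) (mem_Ici.2 (by positivity)) hxy
    _ ≤ φ m + max C 0 := by linarith [hC m hm, le_max_left C 0]
    _ = max (halfLineDist φ x z) (halfLineDist φ z y) + max C 0 := by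
      rw [hmono.map_max (mem_Ici.2 (abs_nonneg _)) (mem_Ici.2 (abs_nonneg _))]; rfl

lemma ConcaveOn.logarithmLike_of_isGromovHyp (hconc : ConcaveOn ℝ (Ici 0) φ)
    (hnonneg : ∀ t : ℝ, 0 ≤ t → 0 ≤ φ t) (h0 : φ 0 = 0) (hΛ : asymptoticSlope φ = 0)
    (hhyp : IsGromovHyp (halfLineDist φ)) : LogarithmLike φ := by
  obtain ⟨δ, -, hδ⟩ := hhyp
  refine ⟨2 * δ + 1, fun t ht => ?_⟩
  obtain ⟨u, hu, hinc⟩ := hconc.exists_ge_sub_le_asymptoticSlope_mul_add h0 ht one_pos (2 * t)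
  rw [hΛ, zero_mul, zero_add] at hinc
  have hmono : φ (u - 2 * t) ≤ φ u :=
    hconc.monotoneOn_Ici_of_nonneg hnonneg h0 (mem_Ici.2 (by linarith)) (mem_Ici.2 (by linarith))
      (by linarith)
  have H := hδ ⟨0, le_rfl⟩ ⟨t, ht⟩ ⟨u, by linarith⟩ ⟨2 * t, by linarith⟩
  simp only [gromovProd, halfLineDist] at H
  rw [show |t - 0| = t by simp [ht], show |u - 0| = u by simp; linarith,
    show |2 * t - 0| = 2 * t by simp [ht],
    show |t - 2 * t| = t by rw [abs_of_nonpos (by linarith)]; ring,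
    show |t - u| = u - t by rw [abs_sub_comm, abs_of_nonneg (by linarith)],
    show |u - 2 * t| = u - 2 * t by rw [abs_of_nonneg (by linarith)], min_def] at H
  split_ifs at H <;> linarith

lemma ConcaveOn.exists_sub_asymptoticSlope_mul_le_of_isGromovHyp
    (hconc : ConcaveOn ℝ (Ici 0) φ) (hnonneg : ∀ t : ℝ, 0 ≤ t → 0 ≤ φ t) (h0 : φ 0 = 0)
    (hΛ : 0 < asymptoticSlope φ) (hhyp : IsGromovHyp (halfLineDist φ)) :
    ∃ M, ∀ t : ℝ, 0 ≤ t → φ t - asymptoticSlope φ * t ≤ M := by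
  obtain ⟨δ, hδ0, hδ⟩ := hhyp
  obtain ⟨C, hC⟩ := hconc.exists_le_asymptoticSlope_add_mul_add hnonneg h0 hΛ
  have hC0 := hC 0 le_rfl
  set Λ := asymptoticSlope φ
  refine ⟨2 * C + 4 * δ + 2, fun t ht => ?_⟩
  set S := φ t - Λ * t
  have hS : 0 ≤ S := sub_nonneg.2 (asymptoticSlope_mul_le hnonneg h0 ht)
  have hΛm : Λ * (S / (2 * Λ)) = S / 2 := by field_simp
  set m := S / (2 * Λ)
  have hm : 0 ≤ m := by positivity
  have hφm := hC m hm
  rcases lt_or_ge t m with htm | hmt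
  · linarith [hC t ht, mul_lt_mul_of_pos_left htm hΛ]
  obtain ⟨X, hX, hinc⟩ := hconc.exists_ge_sub_le_asymptoticSlope_mul_add h0 ht one_pos t
  have hinc₁ := hconc.asymptoticSlope_mul_sub_le hnonneg h0 (by linarith : 0 ≤ t - m)
    (by linarith : t - m ≤ t)
  have hinc₂ := hconc.asymptoticSlope_mul_sub_le hnonneg h0 (by linarith : 0 ≤ X - t)
    (by linarith : X - t ≤ X - t + m)
  have H := hδ ⟨t, ht⟩ ⟨X, by linarith⟩ ⟨t - m, by linarith⟩ ⟨0, le_rfl⟩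
  simp only [gromovProd, halfLineDist] at H
  rw [show |X - t| = X - t by rw [abs_of_nonneg (by linarith)],
    show |0 - t| = t by simp [ht], show |X - 0| = X by simp; linarith,
    show |t - m - t| = m by simp [hm], show |t - m - 0| = t - m by simp; linarith,
    show |X - (t - m)| = X - t + m by rw [abs_of_nonneg (by linarith)]; ring, min_def] at H
  split_ifs at H <;> linarith

end HalfLine

theorem stmt_3_general (φ : ℝ → ℝ)
    (hnonneg : ∀ t : ℝ, 0 ≤ t → 0 ≤ φ t)
    (hconc : ConcaveOn ℝ (Set.Ici 0) φ)
    (h0 : φ 0 = 0)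
    (hlim : Filter.Tendsto φ (nhdsWithin 0 (Set.Ioi 0)) (nhds 0)) :
    IsGromovHyp (halfLineDist φ) ↔
      ((∃ lam : ℝ, 0 < lam ∧ ∃ f : ℝ → ℝ,
          (∀ x : ℝ, 0 ≤ x → 0 ≤ f x) ∧ (∃ M : ℝ, ∀ x : ℝ, 0 ≤ x → f x ≤ M) ∧
          ContinuousOn f (Set.Ici 0) ∧ ConcaveOn ℝ (Set.Ici 0) f ∧ f 0 = 0 ∧
          ∀ x : ℝ, 0 ≤ x → φ x = lam * x + f x) ∨
        (∃ C : ℝ, ∀ x : ℝ, 0 ≤ x → |φ (2 * x) - φ x| ≤ C)) := by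
  have hmono := hconc.monotoneOn_Ici_of_nonneg hnonneg h0
  constructor
  · intro hhyp
    rcases (asymptoticSlope_nonneg hnonneg).eq_or_lt with hΛ | hΛ
    · obtain ⟨C, hC⟩ := hconc.logarithmLike_of_isGromovHyp hnonneg h0 hΛ.symm hhyp
      refine Or.inr ⟨C, fun x hx => ?_⟩
      rw [abs_of_nonneg (sub_nonneg.2 (hmono hx (mem_Ici.2 (by linarith)) (by linarith)))]
      exact hC x hx
    · obtain ⟨M, hM⟩ :=
        hconc.exists_sub_asymptoticSlope_mul_le_of_isGromovHyp hnonneg h0 hΛ hhyp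
      have hcont : ContinuousOn φ (Ici 0) :=
        hconc.continuousOn_Ici <| continuousWithinAt_Ioi_iff_Ici.1 <| by
          rwa [ContinuousWithinAt, h0]
      refine Or.inl ⟨_, hΛ, fun x => φ x - asymptoticSlope φ * x,
        fun x hx => sub_nonneg.2 (asymptoticSlope_mul_le hnonneg h0 hx), ⟨M, hM⟩,
        hcont.sub (continuous_const.mul continuous_id).continuousOn,
        hconc.sub ((convexOn_id (convex_Ici 0)).smul hΛ.le), by simp [h0], fun x _ => by ring⟩
  · rintro (⟨lam, hlam, f, hf, ⟨M, hM⟩, -, -, -, hφ⟩ | ⟨C, hC⟩)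
    · have hline := (isDeltaHyp_abs_sub.const_mul hlam.le).comp (Subtype.val : {t : ℝ // 0 ≤ t} → ℝ)
      have hclose : ∀ x y, |halfLineDist φ x y - (lam * |x.1 - y.1|)| ≤ M := fun x y => by
        rw [halfLineDist, hφ _ (abs_nonneg _), add_sub_cancel_left,
          abs_of_nonneg (hf _ (abs_nonneg _))]
        exact hM _ (abs_nonneg _)
      refine ⟨3 * M, by linarith [hf 0 le_rfl, hM 0 le_rfl], ?_⟩
      simpa using hline.of_abs_sub_le hclose
    · exact isGromovHyp_of_approxUltrametric halfLineDist_comm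
        (approxUltrametric_halfLineDist hmono ⟨C, fun x hx => (le_abs_self _).trans (hC x hx)⟩)

/-- Characterization of unbounded concave metric transforms of the Euclidean
half line that are Gromov hyperbolic. -/
theorem stmt_3 (φ : ℝ → ℝ)
    (hnonneg : ∀ t : ℝ, 0 ≤ t → 0 ≤ φ t)
    (hconc : ConcaveOn ℝ (Set.Ici 0) φ)
    (h0 : φ 0 = 0)
    (hlim : Filter.Tendsto φ (nhdsWithin 0 (Set.Ioi 0)) (nhds 0))
    (hub : UnboundedOnNonneg φ) :
    IsGromovHyp (halfLineDist φ) ↔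
      ((∃ lam : ℝ, 0 < lam ∧ ∃ f : ℝ → ℝ,
          (∀ x : ℝ, 0 ≤ x → 0 ≤ f x) ∧ (∃ M : ℝ, ∀ x : ℝ, 0 ≤ x → f x ≤ M) ∧
          ContinuousOn f (Set.Ici 0) ∧ ConcaveOn ℝ (Set.Ici 0) f ∧ f 0 = 0 ∧
          ∀ x : ℝ, 0 ≤ x → φ x = lam * x + f x) ∨
        (∃ C : ℝ, ∀ x : ℝ, 0 ≤ x → |φ (2 * x) - φ x| ≤ C)) :=
  stmt_3_general φ hnonneg hconc h0 hlim
end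

section
/- Let φ : [0,∞) → [0,∞) satisfy φ⁻¹(0) = {0} (i.e. φ(t) = 0 if and only if t = 0). Then φ is a metric transform if and only if (φ(a), φ(b), φ(c)) is a triangle triplet whenever (a,b,c) is a triangle triplet. -/
/-- Triangle-triplet characterization of metric transforms. -/
theorem stmt_5 (φ : ℝ → ℝ)
    (hnonneg : ∀ t : ℝ, 0 ≤ t → 0 ≤ φ t)
    (hzero : ∀ t : ℝ, 0 ≤ t → (φ t = 0 ↔ t = 0)) :
    IsMetricTransform φ ↔
      ∀ a b c : ℝ, 0 ≤ a → 0 ≤ b → 0 ≤ c → IsTriangleTriplet a b c →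
        IsTriangleTriplet (φ a) (φ b) (φ c) := by
 -- main proof
  constructor
  · intro hmt a b c ha hb hc ht
    obtain ⟨h1, h2, h3⟩ := ht
    have hφ0 : φ 0 = 0 := (hzero 0 le_rfl).mpr rfl
    rcases eq_or_lt_of_le ha with ha0 | ha0
    · have hbc : b = c := by linarith
      subst hbc
      rw [← ha0, hφ0]
      exact ⟨by simpa using hnonneg b hb, by simp, by simp⟩
    rcases eq_or_lt_of_le hb with hb0 | hb0
    · have hac : a = c := by linarith
      subst hac
      rw [← hb0, hφ0]
      exact ⟨by simp, by simpa using hnonneg a ha, by simp⟩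
    rcases eq_or_lt_of_le hc with hc0 | hc0
    · have hab : a = b := by linarith
      subst hab
      rw [← hc0, hφ0]
      exact ⟨by simp, by simp, by simpa using hnonneg a ha⟩
    -- all positive: build a 3-point metric space
    set d : Fin 3 → Fin 3 → ℝ := fun i j =>
      if i = j then 0 else
      if (i = 0 ∧ j = 1) ∨ (i = 1 ∧ j = 0) then c else
      if (i = 0 ∧ j = 2) ∨ (i = 2 ∧ j = 0) then b else a with hd
    have hmet : IsMetricOn d := by
      refine ⟨?_, ?_, ?_⟩
      · intro x y
        fin_cases x <;> fin_cases y <;>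
          simp [hd] <;> intro h <;> linarith
      · intro x y
        fin_cases x <;> fin_cases y <;> simp [hd]
      · intro x y z
        fin_cases x <;> fin_cases y <;> fin_cases z <;>
          simp [hd] <;> linarith
    obtain ⟨_, _, htri⟩ := hmt (Fin 3) d hmet
    have e12 := htri 1 0 2
    have e02 := htri 0 1 2
    have e01 := htri 0 2 1
    simp only [hd, show ((1:Fin 3) ≠ 0) by decide, show ((1:Fin 3) ≠ 2) by decide,
      show ((0:Fin 3) ≠ 1) by decide, show ((0:Fin 3) ≠ 2) by decide,
      show ((2:Fin 3) ≠ 0) by decide, show ((2:Fin 3) ≠ 1) by decide,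
      if_neg, if_pos] at e12 e02 e01
    norm_num at e12 e02 e01
    exact ⟨by linarith, by linarith, by linarith⟩
  · intro h X d hd
    obtain ⟨hd0, hdsym, hdtri⟩ := hd
    have hnn : ∀ x y : X, 0 ≤ d x y := by
      intro x y
      have := hdtri x y x
      rw [(hd0 x x).mpr rfl, hdsym y x] at this
      linarith
    refine ⟨?_, ?_, ?_⟩
    · intro x y
      rw [hzero _ (hnn x y), hd0]
    · intro x y; show φ (d x y) = φ (d y x); rw [hdsym]
    · intro x y z
      have ht : IsTriangleTriplet (d x z) (d x y) (d y z) := by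
        refine ⟨hdtri x y z, ?_, ?_⟩
        · have := hdtri x z y
          rw [hdsym z y] at this
          linarith
        · have := hdtri y x z
          rw [hdsym y x] at this
          linarith
      exact (h _ _ _ (hnn x z) (hnn x y) (hnn y z) ht).1
end

section
/- Let φ : [0,∞) → [0,∞) be a continuous concave function with φ(0) = 0. Then for every ε > 0 there exists a continuous concave function ψ : [0,∞) → [0,∞) that is continuously differentiable on (0,∞), satisfies ψ(0) = 0, and satisfies |φ(x) − ψ(x)| ≤ ε for all x ≥ 0. -/
/-!
Replace `φ` by the average of its increments over a short window,
`ψ x = h⁻¹ ∫₀ʰ (φ (x + s) - φ s) ds`. Every increment `x ↦ φ (x + s) - φ s` is concave, hence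
so is `ψ`, and `ψ' x = (φ (x + h) - φ x) / h` is continuous. By the mean value theorem for
integrals `ψ x = φ (x + c) - φ c` for some `c ∈ (0, h)`; since a nonnegative concave function on
`[0, ∞)` is nondecreasing and has decreasing increments, this lies between `φ x - φ h` and `φ x`.
It remains to take `h` so small that `φ h ≤ ε`.
-/

open Set MeasureTheory intervalIntegral

theorem ConcaveOn.map_add_sub_le_of_le {s : Set ℝ} {f : ℝ → ℝ} (hf : ConcaveOn ℝ s f)
    {a x t : ℝ} (ha : a ∈ s) (hxt : x + t ∈ s) (hax : a ≤ x) (ht : 0 ≤ t) :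
    f (x + t) - f x ≤ f (a + t) - f a := by
  rcases hax.eq_or_lt with rfl | hax
  · rfl
  rcases ht.eq_or_lt with rfl | ht
  · simp
  have hL : 0 < x + t - a := by linarith
  -- `x` and `a + t` are the convex combinations of `a` and `x + t` with swapped weights
  set l := t / (x + t - a)
  have hl : (x - a) / (x + t - a) = 1 - l := by simp only [l]; field_simp; ring
  have hl₀ : 0 ≤ l := by positivity
  have hl₁ : 0 ≤ 1 - l := by rw [← hl]; exact div_nonneg (by linarith) hL.le
  have h₁ := hf.2 ha hxt hl₀ hl₁ (by ring)
  have h₂ := hf.2 ha hxt hl₁ hl₀ (by ring)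
  have e₁ : l • a + (1 - l) • (x + t) = x := by
    simp only [smul_eq_mul, l]; field_simp; ring
  have e₂ : (1 - l) • a + l • (x + t) = a + t := by
    simp only [smul_eq_mul, l]; field_simp; ring
  rw [e₁] at h₁
  rw [e₂] at h₂
  simp only [smul_eq_mul] at h₁ h₂
  linarith

theorem ConcaveOn.monotoneOn_of_bddBelow {f : ℝ → ℝ} {a : ℝ} (hf : ConcaveOn ℝ (Ici a) f)
    (hbdd : BddBelow (f '' Ici a)) : MonotoneOn f (Ici a) := by
  obtain ⟨L, hL⟩ := hbdd
  intro x hx y hy hxy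
  by_contra! hlt
  have hxy' : x < y := hxy.lt_of_ne (by rintro rfl; exact hlt.false)
  set m := (f y - f x) / (y - x)
  have hm : m < 0 := div_neg_of_neg_of_pos (by linarith) (by linarith)
  have hLy : L ≤ f y := hL ⟨y, hy, rfl⟩
  -- the secant line through `x` and `y` drops below `L` at `z`, and `f` lies below it there
  set z := y + (f y - L) / -m + 1
  have hyz : y < z := by
    have : 0 ≤ (f y - L) / -m := div_nonneg (by linarith) (by linarith)
    simp only [z]
    linarith
  have hz : z ∈ Ici a := le_trans hy hyz.le
  have hslope := hf.slope_anti_adjacent hx hz hxy' hyz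
  rw [div_le_iff₀ (by linarith)] at hslope
  have hline : f y + m * (z - y) = L + m := by
    have : m ≠ 0 := hm.ne
    simp only [z]; field_simp; ring
  linarith [hL ⟨z, hz, rfl⟩]

noncomputable def meanIncrement (φ : ℝ → ℝ) (h x : ℝ) : ℝ :=
  h⁻¹ * ∫ s in (0 : ℝ)..h, (φ (x + s) - φ s)

@[simp]
theorem meanIncrement_zero (φ : ℝ → ℝ) (h : ℝ) : meanIncrement φ h 0 = 0 := by
  simp [meanIncrement]

theorem contDiff_meanIncrement {g : ℝ → ℝ} (hg : Continuous g) (h : ℝ) :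
    ContDiff ℝ 1 (meanIncrement g h) := by
  set G : ℝ → ℝ := fun u => ∫ s in (0 : ℝ)..u, g s
  have hG : ContDiff ℝ 1 G := by
    refine contDiff_one_iff_deriv.2
      ⟨fun u => (hg.integral_hasStrictDerivAt 0 u).hasDerivAt.differentiableAt, ?_⟩
    rwa [show deriv G = g from funext (hg.deriv_integral g 0)]
  have hGI : ∀ a b : ℝ, IntervalIntegrable g volume a b := fun _ _ => hg.intervalIntegrable _ _
  have heq : meanIncrement g h = fun x => h⁻¹ * (G (x + h) - G x - G h) := by
    funext x
    have hIx : IntervalIntegrable (fun s => g (x + s)) volume 0 h :=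
      (hg.comp (continuous_const_add x)).intervalIntegrable _ _
    rw [meanIncrement, integral_sub hIx (hGI 0 h), integral_comp_add_left, add_zero,
      integral_interval_sub_left (hGI 0 _) (hGI 0 _)]
  rw [heq]
  exact contDiff_const.mul (((hG.comp (contDiff_id.add contDiff_const)).sub hG).sub contDiff_const)

section HalfLine

variable {φ : ℝ → ℝ} {h : ℝ}

theorem contDiffOn_meanIncrement (hφ : ContinuousOn φ (Ici 0)) (hh : 0 ≤ h) :
    ContDiffOn ℝ 1 (meanIncrement φ h) (Ici 0) := by
  have hg : Continuous fun x => φ (max x 0) :=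
    hφ.comp_continuous (by fun_prop) fun x => le_max_right x 0
  refine (contDiff_meanIncrement hg h).contDiffOn.congr fun x (hx : 0 ≤ x) => ?_
  unfold meanIncrement
  congr 1
  refine integral_congr fun s hs => ?_
  rw [uIcc_of_le hh] at hs
  simp only [max_eq_left (add_nonneg hx hs.1), max_eq_left hs.1]

theorem continuousOn_increment (hφ : ContinuousOn φ (Ici 0)) {x : ℝ} (hx : 0 ≤ x) :
    ContinuousOn (fun s => φ (x + s) - φ s) (Ici 0) :=
  (hφ.comp (continuousOn_const.add continuousOn_id)
    fun s (hs : 0 ≤ s) => (add_nonneg hx hs : 0 ≤ x + s)).sub hφ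

theorem ConcaveOn.meanIncrement (hconc : ConcaveOn ℝ (Ici 0) φ) (hφ : ContinuousOn φ (Ici 0))
    (hh : 0 ≤ h) : ConcaveOn ℝ (Ici 0) (meanIncrement φ h) := by
  have hI : ∀ x ∈ Ici (0 : ℝ), IntervalIntegrable (fun s => φ (x + s) - φ s) volume 0 h :=
    fun x hx => ((continuousOn_increment hφ hx).mono
      (by rw [uIcc_of_le hh]; exact Icc_subset_Ici_self)).intervalIntegrable
  refine ⟨convex_Ici 0, fun x hx y hy a b ha hb hab => ?_⟩
  have hxy : a • x + b • y ∈ Ici (0 : ℝ) := convex_Ici 0 hx hy ha hb hab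
  simp only [_root_.meanIncrement, smul_eq_mul]
  rw [mul_left_comm a, mul_left_comm b, ← mul_add, ← intervalIntegral.integral_const_mul,
    ← intervalIntegral.integral_const_mul,
    ← integral_add ((hI x hx).const_mul a) ((hI y hy).const_mul b)]
  refine mul_le_mul_of_nonneg_left (integral_mono_on hh
    (((hI x hx).const_mul a).add ((hI y hy).const_mul b)) (hI _ hxy) fun s hs => ?_)
    (inv_nonneg.2 hh)
  have key :=
    hconc.2 (add_nonneg hx hs.1 : 0 ≤ x + s) (add_nonneg hy hs.1 : 0 ≤ y + s) ha hb hab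
  have e : a • (x + s) + b • (y + s) = a * x + b * y + s := by
    simp only [smul_eq_mul]; linear_combination s * hab
  rw [e, smul_eq_mul, smul_eq_mul] at key
  linear_combination key - φ s * hab

theorem exists_meanIncrement_eq (hφ : ContinuousOn φ (Ici 0)) (hh : 0 < h) {x : ℝ}
    (hx : 0 ≤ x) : ∃ c ∈ Ioo 0 h, meanIncrement φ h x = φ (x + c) - φ c := by
  obtain ⟨c, hc, hceq⟩ := exists_eq_interval_average hh.ne ((continuousOn_increment hφ hx).mono
    (by rw [uIcc_of_le hh.le]; exact Icc_subset_Ici_self))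
  rw [uIoo_of_le hh.le] at hc
  refine ⟨c, hc, ?_⟩
  rw [hceq, interval_average_eq, sub_zero, smul_eq_mul, meanIncrement]

end HalfLine

/-- Uniform approximation of continuous concave functions by concave functions
of class `C¹` on `(0,∞)`. -/
theorem stmt_8 (φ : ℝ → ℝ)
    (hnonneg : ∀ x : ℝ, 0 ≤ x → 0 ≤ φ x)
    (hcont : ContinuousOn φ (Set.Ici 0))
    (hconc : ConcaveOn ℝ (Set.Ici 0) φ)
    (h0 : φ 0 = 0) :
    ∀ ε : ℝ, 0 < ε → ∃ ψ : ℝ → ℝ,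
      ContinuousOn ψ (Set.Ici 0) ∧ ConcaveOn ℝ (Set.Ici 0) ψ ∧
      (∀ x : ℝ, 0 ≤ x → 0 ≤ ψ x) ∧ ContDiffOn ℝ 1 ψ (Set.Ioi 0) ∧
      ψ 0 = 0 ∧ ∀ x : ℝ, 0 ≤ x → |φ x - ψ x| ≤ ε := by
  intro ε hε
  have hmono : MonotoneOn φ (Ici 0) :=
    hconc.monotoneOn_of_bddBelow ⟨0, by rintro _ ⟨x, hx, rfl⟩; exact hnonneg x hx⟩
  obtain ⟨h, hφh, hh⟩ : ∃ h, φ h < ε ∧ 0 < h :=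
    ((((hcont 0 self_mem_Ici).mono Ioi_subset_Ici_self).eventually
      (gt_mem_nhds (show φ 0 < ε by rwa [h0]))).and self_mem_nhdsWithin).exists
  have hC1 := contDiffOn_meanIncrement hcont hh.le
  refine ⟨meanIncrement φ h, hC1.continuousOn, hconc.meanIncrement hcont hh.le, fun x hx => ?_,
    hC1.mono Ioi_subset_Ici_self, meanIncrement_zero φ h, fun x hx => ?_⟩
  · obtain ⟨c, ⟨hc, -⟩, hψ⟩ := exists_meanIncrement_eq hcont hh hx
    rw [hψ, sub_nonneg]
    exact hmono hc.le (add_nonneg hx hc.le) (by linarith)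
  · obtain ⟨c, ⟨hc, hch⟩, hψ⟩ := exists_meanIncrement_eq hcont hh hx
    have upper : φ (x + c) - φ c ≤ φ x := by
      simpa [h0, add_comm] using
        hconc.map_add_sub_le_of_le self_mem_Ici (add_nonneg hc.le hx) hc.le hx
    have lower₁ : φ x ≤ φ (x + c) := hmono hx (add_nonneg hx hc.le) (by linarith)
    have lower₂ : φ c ≤ φ h := hmono hc.le hh.le hch.le
    rw [hψ, abs_le]
    constructor <;> linarith
end

section
/- Let (X,d) be a Gromov hyperbolic metric space and let φ : [0,∞) → [0,∞) be a metric transform that is also an approximate dilation. Then the transformed space (X,d_φ) is Gromov hyperbolic. -/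
/-- A metric transform which is an approximate dilation preserves Gromov
hyperbolicity. -/
theorem stmt_11 {X : Type} [MetricSpace X]
    (hX : IsGromovHyp (fun x y : X => dist x y))
    (φ : ℝ → ℝ)
    (hnonneg : ∀ t : ℝ, 0 ≤ t → 0 ≤ φ t)
    (hmt : IsMetricTransform φ)
    (hdil : ApproxDilation φ) :
    IsGromovHyp (fun x y : X => φ (dist x y)) := by
  obtain ⟨δ, hδ, hhyp⟩ := hX
  obtain ⟨lam, k, hlam, hk, hφ⟩ := hdil
  refine ⟨lam * δ + 3 * k, by positivity, ?_⟩
  intro w x y z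
  have key : ∀ a b : X,
      lam * gromovProd (fun x y : X => dist x y) w a b - 3 * k / 2 ≤
        gromovProd (fun x y : X => φ (dist x y)) w a b ∧
      gromovProd (fun x y : X => φ (dist x y)) w a b ≤
        lam * gromovProd (fun x y : X => dist x y) w a b + 3 * k / 2 := by
    intro a b
    have h1 := abs_le.1 (hφ (dist a w) dist_nonneg)
    have h2 := abs_le.1 (hφ (dist b w) dist_nonneg)
    have h3 := abs_le.1 (hφ (dist a b) dist_nonneg)
    unfold gromovProd
    constructor <;> simp only <;>
      nlinarith [h1.1, h1.2, h2.1, h2.2, h3.1, h3.2]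
  obtain ⟨hxz1, hxz2⟩ := key x z
  obtain ⟨hyz1, hyz2⟩ := key y z
  obtain ⟨hxy1, hxy2⟩ := key x y
  set g := gromovProd (fun x y : X => dist x y) with hg
  set g' := gromovProd (fun x y : X => φ (dist x y)) with hg'
  have hmin := hhyp w x y z
  have hm : min (g' w x z) (g' w y z) - 3 * k / 2 ≤ lam * min (g w x z) (g w y z) := by
    rcases le_total (g w x z) (g w y z) with h | h
    · rw [min_eq_left h]
      have := min_le_left (g' w x z) (g' w y z)
      linarith
    · rw [min_eq_right h]
      have := min_le_right (g' w x z) (g' w y z)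
      linarith
  have hmul : lam * (min (g w x z) (g w y z) - δ) ≤ lam * g w x y :=
    mul_le_mul_of_nonneg_left hmin hlam.le
  have := mul_pos hlam (lt_of_lt_of_le (by norm_num : (0:ℝ) < 1) (le_refl 1))
  nlinarith [hm, hxy1, hmul, mul_nonneg hlam.le hδ]
end

section
/- Let (X,d) be a metric space and let δ, η ≥ 0. If φ : [0,∞) → [0,∞) is a metric transform that is η-nondecreasing and satisfies φ(2t) − φ(t) ≤ δ for all t ≥ 0, then the transformed space (X,d_φ) is (δ + 2η)-ultrametric. -/
/-- An `η`-nondecreasing metric transform with `φ(2t) − φ(t) ≤ δ` transforms any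
metric space into a `(δ + 2η)`-ultrametric space. -/
theorem stmt_13 {X : Type} [MetricSpace X] (δ η : ℝ) (hδ : 0 ≤ δ) (hη : 0 ≤ η)
    (φ : ℝ → ℝ)
    (hnonneg : ∀ t : ℝ, 0 ≤ t → 0 ≤ φ t)
    (hmt : IsMetricTransform φ)
    (hnd : ∀ t s : ℝ, 0 ≤ t → t ≤ s → φ t ≤ φ s + η)
    (hlog : ∀ t : ℝ, 0 ≤ t → φ (2 * t) - φ t ≤ δ) :
    ∀ x y z : X, φ (dist x y) ≤ max (φ (dist x z)) (φ (dist z y)) + (δ + 2 * η) := by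
  intro x y z
  set m := max (dist x z) (dist z y) with hm
  have hm0 : 0 ≤ m := le_trans dist_nonneg (le_max_left _ _)
  have h1 : dist x y ≤ 2 * m := by
    have := dist_triangle x z y
    have h2 : dist x z ≤ m := le_max_left _ _
    have h3 : dist z y ≤ m := le_max_right _ _
    linarith
  have h4 : φ (dist x y) ≤ φ (2 * m) + η := hnd _ _ dist_nonneg h1
  have h5 : φ (2 * m) - φ m ≤ δ := hlog m hm0
  have h6 : φ m ≤ max (φ (dist x z)) (φ (dist z y)) := by
    rcases max_cases (dist x z) (dist z y) with ⟨he, _⟩ | ⟨he, _⟩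
    · rw [hm, he]; exact le_max_left _ _
    · rw [hm, he]; exact le_max_right _ _
  linarith
end

section
/- If a metric space (X,d) is unbounded and approximately ultrametric, then (X,d) is not roughly geodesic. More precisely, if (X,d) is δ-ultrametric and k-roughly geodesic for some δ, k ≥ 0, then d(x,y) ≤ 3k + 2δ for all x,y ∈ X. -/
lemma stmt_16_aux {X : Type} [MetricSpace X] (δ k : ℝ) (hδ : 0 ≤ δ) (hk : 0 ≤ k)
    (hult : ∀ x y z : X, dist x y ≤ max (dist x z) (dist z y) + δ)
    (hrg : RoughlyGeodesicK (fun x y : X => dist x y) k) :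
    ∀ x y : X, dist x y ≤ 3 * k + 2 * δ := by
  intro x y
  obtain ⟨b, hb, γ, h0, hbend, hγ⟩ := hrg x y
  have hmem0 : (0:ℝ) ∈ Set.Icc 0 b := ⟨le_refl 0, hb⟩
  have hmemb : b ∈ Set.Icc 0 b := ⟨hb, le_refl b⟩
  have hmemh : b/2 ∈ Set.Icc 0 b := ⟨by linarith, by linarith⟩
  have h1 := (hγ 0 (b/2) hmem0 hmemh).2
  have h2 := (hγ (b/2) b hmemh hmemb).2
  have h3 := (hγ 0 b hmem0 hmemb).1
  simp only [h0, hbend] at h1 h2 h3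
  have e1 : |(0:ℝ) - b/2| = b/2 := by rw [abs_of_nonpos (by linarith)]; ring
  have e2 : |b/2 - b| = b/2 := by rw [abs_of_nonpos (by linarith)]; ring
  have e3 : |(0:ℝ) - b| = b := by rw [abs_of_nonpos (by linarith)]; ring
  rw [e1] at h1; rw [e2] at h2; rw [e3] at h3
  have hu := hult x y (γ (b/2))
  rw [dist_comm (γ (b/2)) y] at hu
  have h2' : dist y (γ (b/2)) ≤ b/2 + k := by rw [dist_comm]; exact h2
  rcases max_cases (dist x (γ (b/2))) (dist y (γ (b/2))) with ⟨h,_⟩|⟨h,_⟩ <;>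
    rw [h] at hu <;> linarith

/-- An unbounded approximately ultrametric space is not roughly geodesic; more
precisely a `δ`-ultrametric, `k`-roughly geodesic space has diameter at most
`3k + 2δ`. -/
theorem stmt_16 {X : Type} [MetricSpace X] :
    (∀ δ k : ℝ, 0 ≤ δ → 0 ≤ k →
      (∀ x y z : X, dist x y ≤ max (dist x z) (dist z y) + δ) →
      RoughlyGeodesicK (fun x y : X => dist x y) k →
      ∀ x y : X, dist x y ≤ 3 * k + 2 * δ) ∧
    ((∀ M : ℝ, ∃ x y : X, M < dist x y) →
      (∃ δ : ℝ, 0 ≤ δ ∧ ∀ x y z : X, dist x y ≤ max (dist x z) (dist z y) + δ) →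
      ¬ ∃ k : ℝ, 0 ≤ k ∧ RoughlyGeodesicK (fun x y : X => dist x y) k) := by
  constructor
  · exact fun δ k hδ hk hult hrg => stmt_16_aux δ k hδ hk hult hrg
  · rintro hub ⟨δ, hδ, hult⟩ ⟨k, hk, hrg⟩
    obtain ⟨x, y, hxy⟩ := hub (3*k + 2*δ)
    exact absurd hxy (not_lt.2 (stmt_16_aux δ k hδ hk hult hrg x y))
end

section
/- Let δ ≥ 0 and let φ : [0,∞) → [0,∞) be a metric transform such that the transformed Euclidean half line ([0,∞), |·|_φ) is δ-hyperbolic. Then for all 0 ≤ s ≤ t, |φ((t+s)/2) − φ((t−s)/2)| ≤ (1/2)φ(t) + (1/2)φ(s) ≤ max{φ((t+s)/2), φ((t−s)/2)} + δ. -/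
/-- Necessary inequalities for a metric transform making the half line
`δ`-hyperbolic. -/
theorem stmt_18 (δ : ℝ) (hδ : 0 ≤ δ) (φ : ℝ → ℝ)
    (hnonneg : ∀ t : ℝ, 0 ≤ t → 0 ≤ φ t)
    (hmt : IsMetricTransform φ)
    (hhyp : IsDeltaHyp (halfLineDist φ) δ) :
    ∀ s t : ℝ, 0 ≤ s → s ≤ t →
      |φ ((t + s) / 2) - φ ((t - s) / 2)| ≤ (1 / 2) * φ t + (1 / 2) * φ s ∧
      (1 / 2) * φ t + (1 / 2) * φ s ≤
        max (φ ((t + s) / 2)) (φ ((t - s) / 2)) + δ := by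
  intro s t hs hst
  have hM : IsMetricOn (fun x y : ℝ => |x - y|) :=
    ⟨fun x y => by simp [abs_eq_zero, sub_eq_zero],
     fun x y => abs_sub_comm x y,
     fun x y z => abs_sub_le x y z⟩
  obtain ⟨_, _, htri⟩ := hmt ℝ _ hM
  simp only at htri
  -- useful abs computations
  have a1 : |(0:ℝ) - (t + s) / 2| = (t + s) / 2 := by
    rw [abs_sub_comm, sub_zero, abs_of_nonneg (by linarith)]
  have a2 : |(0:ℝ) - (t - s) / 2| = (t - s) / 2 := by
    rw [abs_sub_comm, sub_zero, abs_of_nonneg (by linarith)]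
  have a3 : |(t - s) / 2 - (t + s) / 2| = s := by
    rw [abs_sub_comm, abs_of_nonneg (by linarith)]; ring
  have a4 : |t - (t + s) / 2| = (t - s) / 2 := by
    rw [abs_of_nonneg (by linarith)]; ring
  have a5 : |(0:ℝ) - t| = t := by
    rw [abs_sub_comm, sub_zero, abs_of_nonneg (by linarith)]
  have a6 : |(t - s) / 2 - t| = (t + s) / 2 := by
    rw [abs_sub_comm, abs_of_nonneg (by linarith)]; ring
  have T1 := htri 0 ((t - s) / 2) ((t + s) / 2)
  rw [a1, a2, a3] at T1
  have T2 := htri 0 t ((t + s) / 2)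
  rw [a1, a5, a4] at T2
  have T3 := htri ((t - s) / 2) ((t + s) / 2) 0
  rw [a3, show |(t + s) / 2 - (0:ℝ)| = (t + s) / 2 by
    rw [sub_zero, abs_of_nonneg (by linarith)]] at T3
  rw [show |(t - s) / 2 - (0:ℝ)| = (t - s)/2 by
    rw [sub_zero, abs_of_nonneg (by linarith)]] at T3
  have T4 := htri ((t + s) / 2) 0 t
  rw [show |(t + s) / 2 - (0:ℝ)| = (t + s)/2 by
    rw [sub_zero, abs_of_nonneg (by linarith)],
    show |(t + s) / 2 - t| = (t - s)/2 by
      rw [abs_sub_comm, abs_of_nonneg (by linarith)]; ring,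
    show |(0:ℝ) - t| = t by rw [abs_sub_comm, sub_zero, abs_of_nonneg (by linarith)]] at T4
  constructor
  · rw [abs_sub_le_iff]
    constructor <;> linarith
  · have H := hhyp ⟨(t - s) / 2, by linarith⟩ ⟨0, le_refl 0⟩ ⟨t, by linarith⟩
      ⟨(t + s) / 2, by linarith⟩
    simp only [gromovProd, halfLineDist] at H
    rw [a1, a5] at H
    rw [show |t - (t - s) / 2| = (t + s) / 2 by
      rw [abs_of_nonneg (by linarith)]; ring] at H
    rw [show |(0:ℝ) - (t - s) / 2| = (t - s) / 2 by
      rw [abs_sub_comm, sub_zero, abs_of_nonneg (by linarith)]] at H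
    rw [show |(t + s) / 2 - (t - s) / 2| = s by
      rw [abs_of_nonneg (by linarith)]; ring] at H
    rw [a4] at H
    rcases le_total ((φ ((t - s) / 2) + φ s - φ ((t + s) / 2)) / 2)
        ((φ ((t + s) / 2) + φ s - φ ((t - s) / 2)) / 2) with h | h
    · rw [min_eq_left h] at H
      have hm := le_max_left (φ ((t + s) / 2)) (φ ((t - s) / 2))
      linarith
    · rw [min_eq_right h] at H
      have hm := le_max_right (φ ((t + s) / 2)) (φ ((t - s) / 2))
      linarith
end
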